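/- arXiv:2605.04612 — 17 statements merged into one kernel-verified Lean document; each statement's English description precedes it below -/
import Mathlib

section
/- In any party-list instance of approval-based committee voting, a committee satisfies PJR if and only if it satisfies lower quota (i.e., each party with nₓ supporters receives at least min(⌊k·nₓ/n⌋, |Cₓ|) seats). -/
open Finset


/-- A committee `W` satisfies proportional justified representation (PJR) in the
instance with voters `N`, approval profile `A`, and committee size `k`:
for every `ℓ ∈ [k]` and every `ℓ`-large (`|N'| ≥ ℓ·n/k`) and `ℓ`-cohesive
(`|⋂_{i∈N'} A_i| ≥ ℓ`) group `N' ⊆ N`, we have `|⋃_{i∈N'}(A_i ∩ W)| ≥ ℓ`. -/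
def PJR (N : Finset ℕ) (A : ℕ → Finset ℕ) (k : ℕ) (W : Finset ℕ) : Prop :=
  ∀ ℓ : ℕ, 1 ≤ ℓ → ℓ ≤ k → ∀ N' ⊆ N, ℓ * N.card ≤ N'.card * k →
    (∃ T : Finset ℕ, ℓ ≤ T.card ∧ ∀ i ∈ N', T ⊆ A i) →
    ℓ ≤ (N'.biUnion fun i => A i ∩ W).card

/-- `(N, A, C, k)` is a party-list instance with set of parties `P`:
the parties are nonempty, pairwise disjoint, cover `C`, and every voter's
ballot is exactly one party. -/
def IsPartyList (N C : Finset ℕ) (A : ℕ → Finset ℕ) (P : Finset (Finset ℕ)) : Prop :=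
  (∀ p ∈ P, p.Nonempty) ∧
  (∀ p ∈ P, ∀ q ∈ P, p ≠ q → Disjoint p q) ∧
  P.biUnion id = C ∧
  ∀ i ∈ N, A i ∈ P

/-- Lower quota on a party-list instance with parties `P`: each party `p` with
`n_p` supporters receives at least `min(⌊k·n_p/n⌋, |p|)` seats. -/
def LowerQuota (N : Finset ℕ) (A : ℕ → Finset ℕ) (k : ℕ) (P : Finset (Finset ℕ))
    (W : Finset ℕ) : Prop :=
  ∀ p ∈ P, min (k * (N.filter fun i => A i = p).card / N.card) p.card ≤ (W ∩ p).card

/-!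
A cohesive group with `ℓ ≥ 1` shares a candidate, so in a party-list instance all of its members
vote for the same party `p`; its members' representation is then `|W ∩ p|`, and it is contained in
the supporters of `p`. Hence the binding PJR constraints are exactly those of the full supporter
groups, for which `ℓ`-largeness reads `ℓ ≤ ⌊k·n_p/n⌋` and `ℓ`-cohesiveness reads `ℓ ≤ |p|`.
-/

def supporters (N : Finset ℕ) (A : ℕ → Finset ℕ) (p : Finset ℕ) : Finset ℕ :=
  N.filter fun i => A i = p

lemma supporters_subset (N : Finset ℕ) (A : ℕ → Finset ℕ) (p : Finset ℕ) :
    supporters N A p ⊆ N :=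
  filter_subset _ _

section

variable {N C : Finset ℕ} {A : ℕ → Finset ℕ} {k : ℕ} {P : Finset (Finset ℕ)} {W : Finset ℕ}

lemma mem_supporters {p : Finset ℕ} {i : ℕ} :
    i ∈ supporters N A p ↔ i ∈ N ∧ A i = p :=
  mem_filter

theorem PJR.min_le_card_inter (h : PJR N A k W) (p : Finset ℕ) :
    min (k * #(supporters N A p) / #N) #p ≤ #(W ∩ p) := by
  set S := supporters N A p
  set ℓ := min (k * #S / #N) #p
  rcases Nat.eq_zero_or_pos ℓ with hℓ | hℓ
  · exact hℓ ▸ Nat.zero_le _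
  have hquota : ℓ ≤ k * #S / #N := min_le_left _ _
  have hℓk : ℓ ≤ k := hquota.trans <| Nat.div_le_of_le_mul <| by
    rw [mul_comm]; exact Nat.mul_le_mul_right k (card_le_card (supporters_subset N A p))
  have hlarge : ℓ * #N ≤ #S * k := calc
    ℓ * #N ≤ k * #S / #N * #N := Nat.mul_le_mul_right _ hquota
    _ ≤ k * #S := Nat.div_mul_le_self _ _
    _ = #S * k := mul_comm _ _
  have hcohesive : ∃ T : Finset ℕ, ℓ ≤ #T ∧ ∀ i ∈ S, T ⊆ A i :=
    ⟨p, min_le_right _ _, fun i hi => (mem_supporters.1 hi).2.ge⟩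
  calc ℓ ≤ #(S.biUnion fun i => A i ∩ W) :=
        h ℓ hℓ hℓk S (supporters_subset N A p) hlarge hcohesive
    _ ≤ #(W ∩ p) := card_le_card <| biUnion_subset.2 fun i hi => by
        rw [(mem_supporters.1 hi).2, inter_comm]

theorem PJR.lowerQuota (h : PJR N A k W) (P : Finset (Finset ℕ)) : LowerQuota N A k P W :=
  fun p _ => h.min_le_card_inter p

lemma IsPartyList.ballot_eq_of_cohesive (hPL : IsPartyList N C A P) {N' T : Finset ℕ}
    (hN' : N' ⊆ N) (hT : T.Nonempty) (hTA : ∀ i ∈ N', T ⊆ A i) {i j : ℕ}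
    (hi : i ∈ N') (hj : j ∈ N') : A i = A j := by
  obtain ⟨-, hdisj, -, hballot⟩ := hPL
  obtain ⟨t, ht⟩ := hT
  by_contra hne
  exact disjoint_left.1 (hdisj _ (hballot i (hN' hi)) _ (hballot j (hN' hj)) hne)
    (hTA i hi ht) (hTA j hj ht)

theorem IsPartyList.pjr_of_lowerQuota (hN : N.Nonempty)
    (hPL : IsPartyList N C A P) (hLQ : LowerQuota N A k P W) : PJR N A k W := by
  rintro ℓ hℓ - N' hN' hlarge ⟨T, hT, hTA⟩
  have hn : 0 < #N := hN.card_pos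
  obtain ⟨i₀, hi₀⟩ : N'.Nonempty := by
    rw [← card_pos]
    exact Nat.pos_of_mul_pos_right ((Nat.mul_pos hℓ hn).trans_le hlarge)
  set p := A i₀
  have hsupp : N' ⊆ supporters N A p := fun i hi =>
    mem_supporters.2 ⟨hN' hi, hPL.ballot_eq_of_cohesive hN' (card_pos.1 (hℓ.trans hT)) hTA hi hi₀⟩
  have hquota : ℓ ≤ k * #(supporters N A p) / #N := (Nat.le_div_iff_mul_le hn).2 <| calc
    ℓ * #N ≤ #N' * k := hlarge
    _ ≤ #(supporters N A p) * k := Nat.mul_le_mul_right k (card_le_card hsupp)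
    _ = k * #(supporters N A p) := mul_comm _ _
  calc ℓ ≤ min (k * #(supporters N A p) / #N) #p :=
        le_min hquota (hT.trans (card_le_card (hTA i₀ hi₀)))
    _ ≤ #(W ∩ p) := hLQ p (hPL.2.2.2 i₀ (hN' hi₀))
    _ ≤ #(N'.biUnion fun i => A i ∩ W) :=
        card_le_card ((inter_comm W p).trans_subset (subset_biUnion_of_mem (fun i => A i ∩ W) hi₀))

end

theorem pjr_iff_lowerQuota_on_partyList_general
    (N C : Finset ℕ) (A : ℕ → Finset ℕ) (k : ℕ) (P : Finset (Finset ℕ)) (W : Finset ℕ)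
    (hN : N.Nonempty) (hPL : IsPartyList N C A P) :
    PJR N A k W ↔ LowerQuota N A k P W :=
  ⟨fun h => h.lowerQuota P, hPL.pjr_of_lowerQuota hN⟩

/-- On any party-list instance, a committee satisfies PJR iff it satisfies lower quota. -/
theorem pjr_iff_lowerQuota_on_partyList
    (N C : Finset ℕ) (A : ℕ → Finset ℕ) (k : ℕ) (P : Finset (Finset ℕ)) (W : Finset ℕ)
    (hN : N.Nonempty) (hPL : IsPartyList N C A P) (hW : W ⊆ C) (hWk : W.card = k) :
    PJR N A k W ↔ LowerQuota N A k P W :=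
  pjr_iff_lowerQuota_on_partyList_general N C A k P W hN hPL
end

section
/- In any party-list instance, a committee satisfies core stability if and only if it satisfies lower quota. (In particular, forward direction: if W is core-stable then W satisfies lower quota; backward: lower quota implies core stability, proved via the mediant inequality by partitioning any deviating coalition by party.) -/
open Finset


/-- Core stability: no nonempty group `N'` together with a set `T ⊆ C` of candidates
with `|N'| ≥ |T|·n/k` exists such that every voter in `N'` strictly prefers `T` to `W`. -/
def CoreStable (N C : Finset ℕ) (A : ℕ → Finset ℕ) (k : ℕ) (W : Finset ℕ) : Prop :=
  ¬ ∃ N' T : Finset ℕ, N' ⊆ N ∧ T ⊆ C ∧ N'.Nonempty ∧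
      T.card * N.card ≤ N'.card * k ∧ ∀ i ∈ N', (A i ∩ W).card < (A i ∩ T).card

/-!
If a party `p` gets fewer than `min(⌊k·n_p/n⌋, |p|)` seats, its `n_p` supporters can deviate to
`|W ∩ p| + 1` candidates of `p`, which they can afford. Conversely, in a deviation `(N', T)`
every voter of `N'` supports a single party `p`, and lower quota for `p` forces
`|N'_p|·k < |T ∩ p|·n`; summing over the parties (the mediant inequality) gives
`|N'|·k < |T|·n`, so the deviation is unaffordable.
-/

lemma card_eq_sum_card_inter_of_subset_biUnion {α : Type*} [DecidableEq α]
    {P : Finset (Finset α)} {T : Finset α} (hP : (P : Set (Finset α)).PairwiseDisjoint id)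
    (hT : T ⊆ P.biUnion id) :
    #T = ∑ p ∈ P, #(T ∩ p) := by
  calc #T = #(P.biUnion fun p ↦ T ∩ p) := by
        rw [← inter_biUnion]; exact congrArg card (inter_eq_left.mpr hT).symm
    _ = ∑ p ∈ P, #(T ∩ p) := card_biUnion (hP.mono fun _ ↦ inter_subset_right)

lemma IsPartyList.pairwiseDisjoint {N C : Finset ℕ} {A : ℕ → Finset ℕ}
    {P : Finset (Finset ℕ)} (hPL : IsPartyList N C A P) : (P : Set (Finset ℕ)).PairwiseDisjoint id :=
  fun p hp q hq hpq ↦ hPL.2.1 p hp q hq hpq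

lemma LowerQuota.of_coreStable {N C : Finset ℕ} {A : ℕ → Finset ℕ} {k : ℕ}
    {P : Finset (Finset ℕ)} {W : Finset ℕ} (hPL : IsPartyList N C A P)
    (hCore : CoreStable N C A k W) : LowerQuota N A k P W := by
  intro p hp
  by_contra! hviol
  set Np := N.filter fun i ↦ A i = p
  set m := #(W ∩ p) + 1
  have hm_div : m ≤ k * #Np / #N := by omega
  have hN : 0 < #N := (Nat.div_pos_iff.mp (hm_div.trans_lt' (show 0 < m by omega))).1
  have hm_quota : m * #N ≤ #Np * k := mul_comm k #Np ▸ (Nat.le_div_iff_mul_le hN).mp hm_div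
  have hNp : Np.Nonempty :=
    card_pos.mp <| Nat.pos_of_mul_pos_right <|
      (Nat.mul_pos (show 0 < m by omega) hN).trans_le hm_quota
  obtain ⟨T, hTp, hTm⟩ := exists_subset_card_eq (show m ≤ #p by omega)
  refine hCore ⟨Np, T, filter_subset _ _, ?_, hNp, hTm ▸ hm_quota, ?_⟩
  · exact hTp.trans (hPL.2.2.1 ▸ subset_biUnion_of_mem id hp)
  · intro i hi
    rw [(mem_filter.mp hi).2, inter_eq_right.mpr hTp, hTm, inter_comm]
    omega

lemma card_filter_mul_lt_of_lowerQuota {N N' T W : Finset ℕ} {A : ℕ → Finset ℕ} {k : ℕ}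
    {P : Finset (Finset ℕ)} {p : Finset ℕ} (hLQ : LowerQuota N A k P W) (hp : p ∈ P)
    (hN' : N' ⊆ N) {i : ℕ} (hi : i ∈ N') (hAi : A i = p)
    (hpref : #(A i ∩ W) < #(A i ∩ T)) :
    #(N'.filter fun j ↦ A j = p) * k < #(T ∩ p) * #N := by
  have hN : 0 < #N := card_pos.mpr ⟨i, hN' hi⟩
  rw [hAi, inter_comm p W, inter_comm p T] at hpref
  have hquota : k * #(N.filter fun j ↦ A j = p) < #(T ∩ p) * #N := by
    rw [← Nat.div_lt_iff_lt_mul hN]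
    have := hLQ p hp
    have := card_le_card (inter_subset_right : T ∩ p ⊆ p)
    omega
  calc #(N'.filter fun j ↦ A j = p) * k ≤ #(N.filter fun j ↦ A j = p) * k :=
        Nat.mul_le_mul_right _ (card_le_card (filter_subset_filter _ hN'))
    _ < #(T ∩ p) * #N := mul_comm k _ ▸ hquota

lemma CoreStable.of_lowerQuota {N C : Finset ℕ} {A : ℕ → Finset ℕ} {k : ℕ}
    {P : Finset (Finset ℕ)} {W : Finset ℕ} (hPL : IsPartyList N C A P)
    (hLQ : LowerQuota N A k P W) : CoreStable N C A k W := by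
  rintro ⟨N', T, hN'N, hTC, ⟨i₀, hi₀⟩, hafford, hpref⟩
  have hparty : ∀ i ∈ N', A i ∈ P := fun i hi ↦ hPL.2.2.2 i (hN'N hi)
  have hblock : ∀ p ∈ P, (N'.filter fun i ↦ A i = p).Nonempty →
      #(N'.filter fun i ↦ A i = p) * k < #(T ∩ p) * #N := by
    rintro p hp ⟨i, hi⟩
    rw [mem_filter] at hi
    exact card_filter_mul_lt_of_lowerQuota hLQ hp hN'N hi.1 hi.2 (hpref i hi.1)
  have hle : ∀ p ∈ P, #(N'.filter fun i ↦ A i = p) * k ≤ #(T ∩ p) * #N := by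
    intro p hp
    rcases (N'.filter fun i ↦ A i = p).eq_empty_or_nonempty with h | h
    · simp [h]
    · exact (hblock p hp h).le
  have hmediant : #N' * k < #T * #N := by
    rw [card_eq_sum_card_fiberwise hparty,
      card_eq_sum_card_inter_of_subset_biUnion hPL.pairwiseDisjoint (hPL.2.2.1 ▸ hTC),
      sum_mul, sum_mul]
    exact sum_lt_sum hle
      ⟨A i₀, hparty i₀ hi₀, hblock _ (hparty i₀ hi₀) ⟨i₀, mem_filter.mpr ⟨hi₀, rfl⟩⟩⟩
  omega

theorem core_iff_lowerQuota_on_partyList_general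
    (N C : Finset ℕ) (A : ℕ → Finset ℕ) (k : ℕ) (P : Finset (Finset ℕ)) (W : Finset ℕ)
    (hPL : IsPartyList N C A P) :
    CoreStable N C A k W ↔ LowerQuota N A k P W :=
  ⟨LowerQuota.of_coreStable hPL, CoreStable.of_lowerQuota hPL⟩

/-- On any party-list instance, a committee is core stable iff it satisfies lower quota. -/
theorem core_iff_lowerQuota_on_partyList
    (N C : Finset ℕ) (A : ℕ → Finset ℕ) (k : ℕ) (P : Finset (Finset ℕ)) (W : Finset ℕ)
    (hN : N.Nonempty) (hPL : IsPartyList N C A P) (hW : W ⊆ C) (hWk : W.card = k) :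
    CoreStable N C A k W ↔ LowerQuota N A k P W :=
  core_iff_lowerQuota_on_partyList_general N C A k P W hPL
end

section
/- PJR+ satisfies monotonicity: if committee W satisfies PJR+ in instance (N, A, C, k) and A' is an approval profile with A_i ⊆ A'_i and A'_i \ A_i ⊆ W for all voters i, then W satisfies PJR+ in (N, A', C, k). -/
open Finset


/-- PJR+: for every `ℓ ∈ [k]`, every candidate `c ∉ W`, and every `ℓ`-large group
`N'` of supporters of `c`, we have `|⋃_{i∈N'}(A_i ∩ W)| ≥ ℓ`. -/
def PJRplus (N : Finset ℕ) (A : ℕ → Finset ℕ) (k : ℕ) (W : Finset ℕ) : Prop :=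
  ∀ ℓ : ℕ, 1 ≤ ℓ → ℓ ≤ k → ∀ c : ℕ, c ∉ W →
    ∀ N' ⊆ N, (∀ i ∈ N', c ∈ A i) → ℓ * N.card ≤ N'.card * k →
    ℓ ≤ (N'.biUnion fun i => A i ∩ W).card

/-! Added approvals lie in `W`, so a supporter of a candidate `c ∉ W` under `A'` already
supported `c` under `A`: the hypothesis of PJR+ transfers back to `A`, while the
represented part `⋃ (A'_i ∩ W)` of a group only grows. -/

theorem Finset.mem_of_mem_of_sdiff_subset {α : Type*} [DecidableEq α] {s t u : Finset α} {a : α}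
    (hstu : t \ s ⊆ u) (hat : a ∈ t) (hau : a ∉ u) : a ∈ s :=
  (mem_union.1 (sdiff_le_iff.1 hstu hat)).resolve_right hau

/-- PJR+ satisfies monotonicity: if `W` satisfies PJR+ and voters only add
approvals of candidates in `W`, then `W` still satisfies PJR+. -/
theorem pjrplus_monotone
    (N : Finset ℕ) (A A' : ℕ → Finset ℕ) (k : ℕ) (W : Finset ℕ)
    (h : PJRplus N A k W)
    (hmon : ∀ i ∈ N, A i ⊆ A' i ∧ A' i \ A i ⊆ W) :
    PJRplus N A' k W := by
  intro ℓ hℓ hℓk c hc N' hN' hsupp hsize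
  have hsupp_old : ∀ i ∈ N', c ∈ A i := fun i hi =>
    mem_of_mem_of_sdiff_subset (hmon i (hN' hi)).2 (hsupp i hi) hc
  calc ℓ ≤ (N'.biUnion fun i => A i ∩ W).card := h ℓ hℓ hℓk c hc N' hN' hsupp_old hsize
    _ ≤ (N'.biUnion fun i => A' i ∩ W).card :=
      card_le_card <| biUnion_mono fun i hi => inter_subset_inter_right (hmon i (hN' hi)).1
end

section
/- EJR+ satisfies monotonicity, independence of losers, robustness to fully satisfied voters, and independence of approval swaps: if W satisfies EJR+ in (N, A, C, k), then (a) it satisfies EJR+ after any voter adds approvals only of candidates in W; (b) it satisfies EJR+ in the instance restricted to C \ {c} for any c ∉ W; (c) it satisfies EJR+ after any voter i replaces A_i by any subset of A_i ∩ W; and (d) it satisfies EJR+ after any voter i replaces A_i by A'_i with A'_i \ W = A_i \ W and |A'_i ∩ W| = |A_i ∩ W|. -/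
open Finset

/-! All four axioms are instances of one transfer principle: EJR+ only looks at which voters
approve a losing candidate and at how many winners each of them approves. So `W` stays EJR+
whenever no voter gains approval of a loser without already approving it, and no voter who
approves a loser loses winners. -/

/-- EJR+: for every `ℓ ∈ [k]`, every candidate `c ∉ W`, and every `ℓ`-large group
`N'` of supporters of `c`, some `i ∈ N'` has `|A_i ∩ W| ≥ ℓ`. -/
def EJRplus (N : Finset ℕ) (A : ℕ → Finset ℕ) (k : ℕ) (W : Finset ℕ) : Prop :=
  ∀ ℓ : ℕ, 1 ≤ ℓ → ℓ ≤ k → ∀ c : ℕ, c ∉ W →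
    ∀ N' ⊆ N, (∀ i ∈ N', c ∈ A i) → ℓ * N.card ≤ N'.card * k →
    ∃ i ∈ N', ℓ ≤ (A i ∩ W).card

theorem EJRplus.of_forall_approves_loser {N : Finset ℕ} {A A' : ℕ → Finset ℕ} {k : ℕ}
    {W : Finset ℕ} (h : EJRplus N A k W)
    (hA' : ∀ i ∈ N, ∀ c ∉ W, c ∈ A' i → c ∈ A i ∧ (A i ∩ W).card ≤ (A' i ∩ W).card) :
    EJRplus N A' k W := by
  intro ℓ hℓ hℓk c hc N' hN' hsupp hcard
  obtain ⟨i, hi, hℓi⟩ :=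
    h ℓ hℓ hℓk c hc N' hN' (fun i hi => (hA' i (hN' hi) c hc (hsupp i hi)).1) hcard
  exact ⟨i, hi, hℓi.trans (hA' i (hN' hi) c hc (hsupp i hi)).2⟩

theorem ejrplus_axioms_general
    (N C : Finset ℕ) (A : ℕ → Finset ℕ) (k : ℕ) (W : Finset ℕ)
    (hW : W ⊆ C)
    (h : EJRplus N A k W) :
    (∀ A' : ℕ → Finset ℕ, (∀ i ∈ N, A i ⊆ A' i ∧ A' i \ A i ⊆ W) →
      EJRplus N A' k W) ∧
    (∀ c ∈ C, c ∉ W → EJRplus N (fun i => A i ∩ C.erase c) k W) ∧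
    (∀ A' : ℕ → Finset ℕ, (∀ i ∈ N, A' i = A i ∨ A' i ⊆ A i ∩ W) →
      EJRplus N A' k W) ∧
    (∀ A' : ℕ → Finset ℕ,
      (∀ i ∈ N, A' i \ W = A i \ W ∧ (A' i ∩ W).card = (A i ∩ W).card) →
      EJRplus N A' k W) := by
  refine ⟨fun A' hA' => ?monotonicity, fun c₀ _ hc₀ => ?losers, fun A' hA' => ?satisfied,
    fun A' hA' => ?swaps⟩
  case monotonicity =>
    refine h.of_forall_approves_loser fun i hi c hc hcA' => ⟨?_, ?_⟩
    · by_contra hcA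
      exact hc ((hA' i hi).2 (mem_sdiff.2 ⟨hcA', hcA⟩))
    · exact card_le_card (inter_subset_inter_right (hA' i hi).1)
  case losers =>
    have hWC : W ⊆ C.erase c₀ := subset_erase.2 ⟨hW, hc₀⟩
    refine h.of_forall_approves_loser fun i _ c _ hc => ⟨(mem_inter.1 hc).1, ?_⟩
    rw [inter_assoc, inter_eq_right.2 hWC]
  case satisfied =>
    refine h.of_forall_approves_loser fun i hi c hc hcA' => ?_
    rcases hA' i hi with hA'A | hA'W
    · exact hA'A ▸ ⟨hcA', le_rfl⟩
    · exact absurd (mem_inter.1 (hA'W hcA')).2 hc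
  case swaps =>
    refine h.of_forall_approves_loser fun i hi c hc hcA' => ⟨?_, (hA' i hi).2.ge⟩
    have hc' : c ∈ A i \ W := (hA' i hi).1 ▸ mem_sdiff.2 ⟨hcA', hc⟩
    exact (mem_sdiff.1 hc').1

/-- EJR+ satisfies (a) monotonicity, (b) independence of losers,
(c) robustness to fully satisfied voters, and (d) independence of approval swaps. -/
theorem ejrplus_axioms
    (N C : Finset ℕ) (A : ℕ → Finset ℕ) (k : ℕ) (W : Finset ℕ)
    (hA : ∀ i ∈ N, A i ⊆ C) (hW : W ⊆ C) (hWk : W.card = k)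
    (h : EJRplus N A k W) :
    (∀ A' : ℕ → Finset ℕ, (∀ i ∈ N, A i ⊆ A' i ∧ A' i \ A i ⊆ W) →
      EJRplus N A' k W) ∧
    (∀ c ∈ C, c ∉ W → EJRplus N (fun i => A i ∩ C.erase c) k W) ∧
    (∀ A' : ℕ → Finset ℕ, (∀ i ∈ N, A' i = A i ∨ A' i ⊆ A i ∩ W) →
      EJRplus N A' k W) ∧
    (∀ A' : ℕ → Finset ℕ,
      (∀ i ∈ N, A' i \ W = A i \ W ∧ (A' i ∩ W).card = (A i ∩ W).card) →
      EJRplus N A' k W) :=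
  ejrplus_axioms_general N C A k W hW h
end

section
/- PJR does not satisfy monotonicity: there exist an instance (N, A, C, k), a committee W satisfying PJR, and a profile A' obtained from A by adding to one voter's ballot a single candidate from W, such that W violates PJR in (N, A', C, k). Concretely, with n = 4, k = 6, C = {c₁,…,c₇}, ballots A₁ = {c₁,c₂,c₃}, A₂ = {c₁,c₂}, A₃ = A₄ = {c₄,c₅,c₆,c₇}, the committee W = {c₁,c₃,c₄,c₅,c₆,c₇} satisfies PJR, but after voter 2 additionally approves c₃ it does not. -/
/-!
Voters 1 and 2 have only candidates 1 and 2 in common, so they are at most 2-cohesive, and `W`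
gives them the two seats 1 and 3; voters 3 and 4 are represented by all of 4, 5, 6, 7, and a group
mixing the two camps has no common candidate. Once voter 2 also approves 3, the pair {1, 2} becomes
3-large and 3-cohesive, yet `W ∩ (A₁ ∪ A₂)` is still only {1, 3}.
-/

open Finset


/-- `⋂_{i∈N'} A_i` when `N'` is nonempty and all ballots lie in `C`; the ambient `C` keeps it
finite for `N' = ∅`. -/
def commonApprovals (C : Finset ℕ) (A : ℕ → Finset ℕ) (N' : Finset ℕ) : Finset ℕ :=
  C.filter fun c => ∀ i ∈ N', c ∈ A i

lemma card_le_card_commonApprovals {C : Finset ℕ} {A : ℕ → Finset ℕ} {N' : Finset ℕ}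
    (hA : ∀ i ∈ N', A i ⊆ C) (hN' : N'.Nonempty) {T : Finset ℕ} (hT : ∀ i ∈ N', T ⊆ A i) :
    T.card ≤ (commonApprovals C A N').card := by
  obtain ⟨i₀, hi₀⟩ := hN'
  exact card_le_card fun c hc => mem_filter.2 ⟨hA i₀ hi₀ (hT i₀ hi₀ hc), fun i hi => hT i hi hc⟩

/-- PJR reduces to a finite check: the cohesion witness may be replaced by the set of common
approvals. -/
lemma pjr_of_forall_powerset {N : Finset ℕ} {A : ℕ → Finset ℕ} {k : ℕ} {W : Finset ℕ}
    (C : Finset ℕ) (hA : ∀ i ∈ N, A i ⊆ C) (hN : N.Nonempty)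
    (h : ∀ N' ∈ N.powerset, N'.Nonempty → ∀ ℓ ∈ Icc 1 k, ℓ * N.card ≤ N'.card * k →
      ℓ ≤ (commonApprovals C A N').card → ℓ ≤ (N'.biUnion fun i => A i ∩ W).card) :
    PJR N A k W := by
  rintro ℓ hℓ hℓk N' hN'N hlarge ⟨T, hTℓ, hT⟩
  have hN' : N'.Nonempty := by
    rw [nonempty_iff_ne_empty]
    rintro rfl
    have : 0 < ℓ * N.card := Nat.mul_pos hℓ hN.card_pos
    simp only [card_empty, zero_mul] at hlarge
    omega
  exact h N' (mem_powerset.2 hN'N) hN' ℓ (mem_Icc.2 ⟨hℓ, hℓk⟩) hlarge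
    (hTℓ.trans (card_le_card_commonApprovals (fun i hi => hA i (hN'N hi)) hN' hT))

/-- PJR fails monotonicity: in the concrete instance with `n = 4`, `k = 6`,
ballots `A₁ = {1,2,3}`, `A₂ = {1,2}`, `A₃ = A₄ = {4,5,6,7}`, the committee
`W = {1,3,4,5,6,7}` satisfies PJR, but after voter `2` additionally approves
candidate `3 ∈ W` it violates PJR. -/
theorem pjr_not_monotone :
    PJR ({1,2,3,4} : Finset ℕ)
      (fun i => if i = 1 then {1,2,3} else if i = 2 then {1,2} else {4,5,6,7})
      6 ({1,3,4,5,6,7} : Finset ℕ) ∧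
    ¬ PJR ({1,2,3,4} : Finset ℕ)
      (fun i => if i = 1 then {1,2,3} else if i = 2 then {1,2,3} else {4,5,6,7})
      6 ({1,3,4,5,6,7} : Finset ℕ) := by
  refine ⟨pjr_of_forall_powerset (Icc 1 7) (by decide) (by decide) (by decide), fun h => ?_⟩
  have := h 3 (by norm_num) (by norm_num) {1,2} (by decide) (by decide)
    ⟨{1,2,3}, by decide, by decide⟩
  exact absurd this (by decide)
end

section
/- EJR does not satisfy monotonicity: with n = 4, k = 6, C = {c₁,…,c₇}, ballots A₁ = {c₁,c₂,c₃}, A₂ = {c₁,c₂}, A₃ = A₄ = {c₄,c₅,c₆,c₇}, the committee W = {c₁,c₃,c₄,c₅,c₆,c₇} satisfies EJR, but after voter 2 additionally approves candidate c₃ ∈ W, W violates EJR. -/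
open Finset


def EJR (N : Finset ℕ) (A : ℕ → Finset ℕ) (k : ℕ) (W : Finset ℕ) : Prop :=
  ∀ ℓ : ℕ, 1 ≤ ℓ → ℓ ≤ k → ∀ N' ⊆ N, ℓ * N.card ≤ N'.card * k →
    (∃ T : Finset ℕ, ℓ ≤ T.card ∧ ∀ i ∈ N', T ⊆ A i) →
    ∃ i ∈ N', ℓ ≤ (A i ∩ W).card

/-!
With `n = 4` and `k = 6`, a single voter deserves only one seat and a pair deserves three.
Before the change, voters 3 and 4 approve only committee members, so every cohesive group
containing one of them is fully represented; the pair {1, 2} agrees on only two candidates,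
and voter 1 has two representatives. Once voter 2 also approves candidate 3, the pair agrees on
three candidates and deserves three seats, but each of its voters still has only two.
-/

def IsCohesive (A : ℕ → Finset ℕ) (N' : Finset ℕ) (ℓ : ℕ) : Prop :=
  ∃ T : Finset ℕ, ℓ ≤ T.card ∧ ∀ i ∈ N', T ⊆ A i

namespace IsCohesive

variable {A : ℕ → Finset ℕ} {N' : Finset ℕ} {ℓ i j : ℕ}

theorem le_card_inter (h : IsCohesive A N' ℓ) (hi : i ∈ N') (hj : j ∈ N') :
    ℓ ≤ (A i ∩ A j).card := by
  obtain ⟨T, hT, hTA⟩ := h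
  exact hT.trans (card_le_card (subset_inter (hTA i hi) (hTA j hj)))

theorem le_card_inter_of_subset {W : Finset ℕ} (h : IsCohesive A N' ℓ) (hi : i ∈ N')
    (hAW : A i ⊆ W) : ℓ ≤ (A i ∩ W).card := by
  simpa [inter_eq_left.mpr hAW] using h.le_card_inter hi hi

end IsCohesive

theorem not_ejr_of_isCohesive {N : Finset ℕ} {A : ℕ → Finset ℕ} {k : ℕ} {W N' : Finset ℕ}
    {ℓ : ℕ} (hℓ : 1 ≤ ℓ) (hℓk : ℓ ≤ k) (hN' : N' ⊆ N) (hsize : ℓ * N.card ≤ N'.card * k)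
    (hcoh : IsCohesive A N' ℓ) (hW : ∀ i ∈ N', (A i ∩ W).card < ℓ) : ¬ EJR N A k W := by
  intro h
  obtain ⟨i, hi, hiW⟩ := h ℓ hℓ hℓk N' hN' hsize hcoh
  exact (hW i hi).not_ge hiW

def ballotsBefore (i : ℕ) : Finset ℕ :=
  if i = 1 then {1,2,3} else if i = 2 then {1,2} else {4,5,6,7}

def ballotsAfter (i : ℕ) : Finset ℕ :=
  if i = 1 then {1,2,3} else if i = 2 then {1,2,3} else {4,5,6,7}

theorem ejr_ballotsBefore : EJR {1,2,3,4} ballotsBefore 6 {1,3,4,5,6,7} := by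
  intro ℓ hℓ _ N' hN' hsize (hcoh : IsCohesive _ N' ℓ)
  rw [show ({1,2,3,4} : Finset ℕ).card = 4 from rfl] at hsize
  by_cases hlarge : ∃ i ∈ N', 3 ≤ i
  · obtain ⟨i, hi, h3i⟩ := hlarge
    have hA : ballotsBefore i = {4,5,6,7} := by
      rw [ballotsBefore, if_neg (by omega), if_neg (by omega)]
    exact ⟨i, hi, hcoh.le_card_inter_of_subset hi (by rw [hA]; decide)⟩
  push Not at hlarge
  have hsmall : ∀ i ∈ N', i = 1 ∨ i = 2 := fun i hi => by
    have := hN' hi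
    simp only [mem_insert, mem_singleton] at this
    have := hlarge i hi
    omega
  by_cases hpair : 1 ∈ N' ∧ 2 ∈ N'
  · refine ⟨1, hpair.1, (hcoh.le_card_inter hpair.1 hpair.2).trans ?_⟩
    decide
  have hsingle : N'.card ≤ 1 := card_le_one.mpr fun a ha b hb => by
    rcases hsmall a ha with rfl | rfl <;> rcases hsmall b hb with rfl | rfl <;> tauto
  have hℓ1 : ℓ ≤ 1 := by omega
  obtain ⟨i, hi⟩ : N'.Nonempty := card_pos.mp (by omega)
  refine ⟨i, hi, hℓ1.trans ?_⟩
  rcases hsmall i hi with rfl | rfl <;> decide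

theorem not_ejr_ballotsAfter : ¬ EJR {1,2,3,4} ballotsAfter 6 {1,3,4,5,6,7} := by
  refine not_ejr_of_isCohesive (N' := {1,2}) (ℓ := 3) (by norm_num) (by norm_num) (by decide)
    (by decide) ⟨{1,2,3}, le_rfl, ?_⟩ ?_
  · intro i hi
    simp only [mem_insert, mem_singleton] at hi
    rcases hi with rfl | rfl <;> rfl
  · intro i hi
    simp only [mem_insert, mem_singleton] at hi
    rcases hi with rfl | rfl <;> decide

/-- EJR fails monotonicity: in the concrete instance with `n = 4`, `k = 6`,
ballots `A₁ = {1,2,3}`, `A₂ = {1,2}`, `A₃ = A₄ = {4,5,6,7}`, the committee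
`W = {1,3,4,5,6,7}` satisfies EJR, but after voter `2` additionally approves
candidate `3 ∈ W` it violates EJR. -/
theorem ejr_not_monotone :
    EJR ({1,2,3,4} : Finset ℕ)
      (fun i => if i = 1 then {1,2,3} else if i = 2 then {1,2} else {4,5,6,7})
      6 ({1,3,4,5,6,7} : Finset ℕ) ∧
    ¬ EJR ({1,2,3,4} : Finset ℕ)
      (fun i => if i = 1 then {1,2,3} else if i = 2 then {1,2,3} else {4,5,6,7})
      6 ({1,3,4,5,6,7} : Finset ℕ) :=
  ⟨ejr_ballotsBefore, not_ejr_ballotsAfter⟩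
end

section
/- Any proportionality notion f satisfying independence of losers, monotonicity, robustness to fully satisfied voters, and lower quota for party-lists is a refinement of PJR+; that is, for every instance I, every committee in f(I) satisfies PJR+. -/
/-!
Suppose `W` violates PJR+ for an `ℓ`-large group `N'` of supporters of some `c ∉ W`, so that
`T = ⋃_{i ∈ N'} (A_i ∩ W)` has fewer than `ℓ` members. Deleting every loser except `c`,
emptying the ballots of the voters outside `N'` and then adding approvals inside `W` keeps `W`
selected and produces the party-list instance in which `N'` votes for the party `{c} ∪ T` and
everybody else for `W \ T`. Lower quota gives `{c} ∪ T` at least `min(ℓ, |T| + 1) > |T|` seats,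
but `W` contains only `T` of it.
-/

open Finset

section Axioms

variable (f : Finset ℕ → (ℕ → Finset ℕ) → Finset ℕ → ℕ → Finset ℕ → Prop)

def IndependentOfLosers : Prop :=
  ∀ N A C k W, f N A C k W → ∀ c ∈ C, c ∉ W →
    f N (fun i => A i ∩ C.erase c) (C.erase c) k W

def MonotoneInWinners : Prop :=
  ∀ N A C k W A', f N A C k W →
    (∀ i ∈ N, A i ⊆ A' i ∧ A' i \ A i ⊆ W) → f N A' C k W

def RobustToSatisfied : Prop :=
  ∀ N A C k W A', f N A C k W →
    (∀ i ∈ N, A' i = A i ∨ A' i ⊆ A i ∩ W) → f N A' C k W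

end Axioms

def twoPartyProfile (N' T W : Finset ℕ) (c : ℕ) (i : ℕ) : Finset ℕ :=
  if i ∈ N' then insert c T else W \ T

theorem isPartyList_twoPartyProfile {N N' T W : Finset ℕ} {c : ℕ} (hTW : T ⊆ W) (hc : c ∉ W)
    (hWT : (W \ T).Nonempty) :
    IsPartyList N (insert c W) (twoPartyProfile N' T W c) {insert c T, W \ T} := by
  have hdisj : Disjoint (insert c T) (W \ T) :=
    disjoint_insert_left.mpr ⟨fun h => hc (mem_sdiff.mp h).1, disjoint_sdiff⟩
  refine ⟨?_, ?_, ?_, fun i _ => ?_⟩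
  · simp [hWT]
  · simp only [mem_insert, mem_singleton]
    rintro p (rfl | rfl) q (rfl | rfl) hpq
    exacts [absurd rfl hpq, hdisj, hdisj.symm, absurd rfl hpq]
  · rw [biUnion_insert, singleton_biUnion, id, id, insert_union, union_sdiff_of_subset hTW]
  · unfold twoPartyProfile
    split_ifs <;> simp

section Reduction

variable {f : Finset ℕ → (ℕ → Finset ℕ) → Finset ℕ → ℕ → Finset ℕ → Prop}
  {N C : Finset ℕ} {A : ℕ → Finset ℕ} {k : ℕ} {W : Finset ℕ}

theorem RobustToSatisfied.congr (hRob : RobustToSatisfied f) {A' : ℕ → Finset ℕ}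
    (hf : f N A C k W) (hA : ∀ i ∈ N, A' i = A i) : f N A' C k W :=
  hRob N A C k W A' hf fun i hi => Or.inl (hA i hi)

theorem IndependentOfLosers.restrict (hIoL : IndependentOfLosers f)
    (hRob : RobustToSatisfied f) {D : Finset ℕ} (hA : ∀ i ∈ N, A i ⊆ C) (hWD : W ⊆ D)
    (hDC : D ⊆ C) (hf : f N A C k W) : f N (fun i => A i ∩ D) D k W := by
  suffices h : ∀ S ⊆ C, Disjoint S W → f N (fun i => A i ∩ (C \ S)) (C \ S) k W by
    simpa only [Finset.sdiff_sdiff_eq_self hDC] using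
      h (C \ D) sdiff_subset (sdiff_disjoint.mono_right hWD)
  intro S
  induction S using Finset.induction_on with
  | empty =>
    intro _ _
    simpa only [sdiff_empty] using hRob.congr hf fun i hi => inter_eq_left.mpr (hA i hi)
  | insert a S ha ih =>
    intro hS hSW
    have hf' := hIoL N _ (C \ S) k W
      (ih ((subset_insert a S).trans hS) (hSW.mono_left (subset_insert a S))) a
      (mem_sdiff.mpr ⟨hS (mem_insert_self a S), ha⟩)
      (disjoint_left.mp hSW (mem_insert_self a S))
    simpa only [sdiff_insert, inter_assoc, inter_eq_right.mpr (erase_subset a _)] using hf'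

theorem selected_twoPartyProfile (hIoL : IndependentOfLosers f) (hMon : MonotoneInWinners f)
    (hRob : RobustToSatisfied f) {N' : Finset ℕ} {c : ℕ} (hA : ∀ i ∈ N, A i ⊆ C) (hW : W ⊆ C)
    (hcC : c ∈ C) (hN'c : ∀ i ∈ N', c ∈ A i) (hf : f N A C k W) :
    f N (twoPartyProfile N' (N'.biUnion fun i => A i ∩ W) W c) (insert c W) k W := by
  have hf₁ := hIoL.restrict hRob hA (subset_insert c W) (insert_subset hcC hW) hf
  have hf₂ : f N (fun i => if i ∈ N' then A i ∩ insert c W else ∅) (insert c W) k W :=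
    hRob _ _ _ _ _ _ hf₁ fun i _ => by split_ifs <;> simp
  refine hMon _ _ _ _ _ _ hf₂ fun i _ => ?_
  unfold twoPartyProfile
  split_ifs with hi
  · constructor
    · intro x hx
      obtain ⟨hxA, hxW⟩ := mem_inter.mp hx
      rcases mem_insert.mp hxW with rfl | hxW
      · exact mem_insert_self _ _
      · exact mem_insert_of_mem (mem_biUnion.mpr ⟨i, hi, mem_inter.mpr ⟨hxA, hxW⟩⟩)
    · intro x hx
      obtain ⟨hxT, hxA⟩ := mem_sdiff.mp hx
      rcases mem_insert.mp hxT with rfl | hxT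
      · exact absurd (mem_inter.mpr ⟨hN'c i hi, mem_insert_self _ _⟩) hxA
      · obtain ⟨j, -, hxj⟩ := mem_biUnion.mp hxT
        exact (mem_inter.mp hxj).2
  · exact ⟨empty_subset _, sdiff_subset.trans sdiff_subset⟩

end Reduction

theorem LowerQuota.min_le_card_inter {N : Finset ℕ} {A : ℕ → Finset ℕ} {k : ℕ}
    {P : Finset (Finset ℕ)} {W p N' : Finset ℕ} {ℓ : ℕ} (h : LowerQuota N A k P W) (hp : p ∈ P)
    (hN : N.Nonempty) (hN'N : N' ⊆ N) (hN'p : ∀ i ∈ N', A i = p)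
    (hℓ : ℓ * #N ≤ #N' * k) : min ℓ #p ≤ #(W ∩ p) := by
  have hquota : ℓ ≤ k * #(N.filter fun i => A i = p) / #N := by
    rw [Nat.le_div_iff_mul_le hN.card_pos]
    calc ℓ * #N ≤ #N' * k := hℓ
      _ ≤ #(N.filter fun i => A i = p) * k :=
        Nat.mul_le_mul_right k (card_le_card fun i hi => mem_filter.mpr ⟨hN'N hi, hN'p i hi⟩)
      _ = k * #(N.filter fun i => A i = p) := mul_comm _ _
  exact (min_le_min_right _ hquota).trans (h p hp)

/-- Any proportionality notion satisfying independence of losers, monotonicity,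
robustness to fully satisfied voters, and lower quota for party-lists is a
refinement of PJR+. -/
theorem refinement_of_pjrplus
    (f : Finset ℕ → (ℕ → Finset ℕ) → Finset ℕ → ℕ → Finset ℕ → Prop)
    (hIoL : ∀ N A C k W, f N A C k W → ∀ c ∈ C, c ∉ W →
      f N (fun i => A i ∩ C.erase c) (C.erase c) k W)
    (hMon : ∀ N A C k W A', f N A C k W →
      (∀ i ∈ N, A i ⊆ A' i ∧ A' i \ A i ⊆ W) → f N A' C k W)
    (hRob : ∀ N A C k W A', f N A C k W →
      (∀ i ∈ N, A' i = A i ∨ A' i ⊆ A i ∩ W) → f N A' C k W)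
    (hLQ : ∀ N A C k P W, IsPartyList N C A P → f N A C k W → LowerQuota N A k P W) :
    ∀ N A C k W, N.Nonempty → (∀ i ∈ N, A i ⊆ C) → W ⊆ C → W.card = k →
      f N A C k W → PJRplus N A k W := by
  intro N A C k W hN hA hW hk hf ℓ hℓ hℓk c hc N' hN'N hN'c hℓN'
  set T := N'.biUnion fun i => A i ∩ W
  by_contra! hT
  have hTW : T ⊆ W := biUnion_subset.mpr fun i _ => inter_subset_right
  obtain ⟨i, hi⟩ : N'.Nonempty :=
    card_pos.mp (Nat.pos_of_mul_pos_right ((Nat.mul_pos hℓ hN.card_pos).trans_le hℓN'))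
  have hcC : c ∈ C := hA i (hN'N hi) (hN'c i hi)
  have hWT : (W \ T).Nonempty := by
    rw [← card_pos, card_sdiff_of_subset hTW]
    omega
  have hquota := (hLQ _ _ _ _ _ _ (isPartyList_twoPartyProfile hTW hc hWT)
    (selected_twoPartyProfile hIoL hMon hRob hA hW hcC hN'c hf)).min_le_card_inter
    (mem_insert_self _ _) hN hN'N (fun i hi => if_pos hi) hℓN'
  rw [inter_insert_of_notMem hc, inter_eq_right.mpr hTW,
    card_insert_of_notMem fun h => hc (hTW h)] at hquota
  omega
end

section
/- If a proportionality notion f refines PJR (every committee in f(I) satisfies PJR for all instances I) and f satisfies monotonicity, then f refines PJR+. -/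
open Finset

/-!
Suppose the supporters `N'` of some `c ∉ W` are `ℓ`-large but are represented only by the set
`U = ⋃_{i ∈ N'} (A i ∩ W)` with `|U| < ℓ`. Add `U` to every ballot: since `U ⊆ W`, monotonicity keeps
`W` in `f`. Now every voter of `N'` approves `insert c U`, so `N'` is `(|U| + 1)`-cohesive and still
`(|U| + 1)`-large, while its representation in `W` is still `U`, contradicting PJR.
-/

theorem Finset.biUnion_inter_subset_right {α β : Type*} [DecidableEq β]
    (s : Finset α) (t : α → Finset β) (u : Finset β) : (s.biUnion fun i => t i ∩ u) ⊆ u :=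
  biUnion_inter s t u ▸ inter_subset_right

theorem Finset.biUnion_union_biUnion_inter_subset {α β : Type*} [DecidableEq β]
    (s : Finset α) (t : α → Finset β) (u : Finset β) :
    (s.biUnion fun i => (t i ∪ s.biUnion fun j => t j ∩ u) ∩ u) ⊆
      s.biUnion fun j => t j ∩ u :=
  biUnion_subset.2 fun i hi => by
    rw [union_inter_distrib_right]
    exact union_subset (subset_biUnion_of_mem (fun j => t j ∩ u) hi) inter_subset_left

theorem le_card_biUnion_inter_of_pjr_padded {N N' W : Finset ℕ} {A : ℕ → Finset ℕ} {k ℓ c : ℕ}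
    (hW : PJR N (fun i => A i ∪ N'.biUnion fun j => A j ∩ W) k W) (hℓk : ℓ ≤ k) (hc : c ∉ W)
    (hN' : N' ⊆ N) (hcA : ∀ i ∈ N', c ∈ A i) (hlarge : ℓ * N.card ≤ N'.card * k) :
    ℓ ≤ (N'.biUnion fun i => A i ∩ W).card := by
  set U := N'.biUnion fun i => A i ∩ W
  by_contra! hU
  have hcU : c ∉ U := fun h => hc (biUnion_inter_subset_right N' A W h)
  have hcohesive : ∃ T : Finset ℕ, U.card + 1 ≤ T.card ∧ ∀ i ∈ N', T ⊆ A i ∪ U :=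
    ⟨insert c U, (card_insert_of_notMem hcU).ge,
      fun i hi => insert_subset (mem_union_left _ (hcA i hi)) subset_union_right⟩
  have hrep : U.card + 1 ≤ (N'.biUnion fun i => (A i ∪ U) ∩ W).card :=
    hW (U.card + 1) le_add_self (by omega) N' hN'
      ((Nat.mul_le_mul_right _ hU).trans hlarge) hcohesive
  exact Nat.not_succ_le_self _
    (hrep.trans (card_le_card (biUnion_union_biUnion_inter_subset N' A W)))

/-- If a proportionality notion refines PJR and satisfies monotonicity,
then it refines PJR+. -/
theorem pjr_refinement_monotone_refines_pjrplus
    (f : Finset ℕ → (ℕ → Finset ℕ) → Finset ℕ → ℕ → Finset ℕ → Prop)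
    (hPJR : ∀ N A C k W, f N A C k W → PJR N A k W)
    (hMon : ∀ N A C k W A', f N A C k W →
      (∀ i ∈ N, A i ⊆ A' i ∧ A' i \ A i ⊆ W) → f N A' C k W) :
    ∀ N A C k W, f N A C k W → PJRplus N A k W := by
  intro N A C k W hf ℓ _ hℓk c hc N' hN' hcA hlarge
  have hpadded : f N (fun i => A i ∪ N'.biUnion fun j => A j ∩ W) C k W :=
    hMon N A C k W _ hf fun i _ => ⟨subset_union_left, by
      rw [union_sdiff_left]
      exact sdiff_subset.trans (biUnion_inter_subset_right N' A W)⟩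
  exact le_card_biUnion_inter_of_pjr_padded (hPJR _ _ C k W hpadded) hℓk hc hN' hcA hlarge
end

section
/- Any proportionality notion f satisfying independence of losers, monotonicity, robustness to fully satisfied voters, independence of approval swaps, and lower quota for party-lists is a refinement of EJR+. -/
open Finset


/-! Suppose a group `N'` of at least `ℓ·n/k` supporters of an unelected candidate `c` all
approve fewer than `ℓ` winners, and fix `T ⊆ W` with `|T| = ℓ - 1`. Deleting every loser
other than `c`, emptying the ballots outside `N'`, swapping the approved winners of each
member of `N'` into `T` and then completing them to `T`, and giving everybody outside `N'`
the ballot `W \ T`, keeps `W` acceptable and yields the party-list profile with parties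
`{c} ∪ T` (supported by `N'`) and `W \ T`. Lower quota then owes `{c} ∪ T` at least
`min(⌊k·|N'|/n⌋, ℓ) = ℓ` seats, but it holds only the `ℓ - 1` seats of `T`. -/

/-- `f N A C k W` says that the committee `W` of size `k` is acceptable for the voters `N`
with ballots `A` over the candidates `C`. -/
abbrev ProportionalityNotion : Type :=
  Finset ℕ → (ℕ → Finset ℕ) → Finset ℕ → ℕ → Finset ℕ → Prop

namespace ProportionalityNotion

def IndepOfLosers (f : ProportionalityNotion) : Prop :=
  ∀ N A C k W, f N A C k W → ∀ c ∈ C, c ∉ W →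
    f N (fun i => A i ∩ C.erase c) (C.erase c) k W

def MonotoneInWinners (f : ProportionalityNotion) : Prop :=
  ∀ N A C k W A', f N A C k W →
    (∀ i ∈ N, A i ⊆ A' i ∧ A' i \ A i ⊆ W) → f N A' C k W

def RobustToSatisfied (f : ProportionalityNotion) : Prop :=
  ∀ N A C k W A', f N A C k W →
    (∀ i ∈ N, A' i = A i ∨ A' i ⊆ A i ∩ W) → f N A' C k W

def IndepOfSwaps (f : ProportionalityNotion) : Prop :=
  ∀ N A C k W A', f N A C k W →
    (∀ i ∈ N, A' i \ W = A i \ W ∧ (A' i ∩ W).card = (A i ∩ W).card) → f N A' C k W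

variable {f : ProportionalityNotion} {N C W : Finset ℕ} {A : ℕ → Finset ℕ} {k : ℕ}

theorem MonotoneInWinners.congr (hMon : MonotoneInWinners f) {A' : ℕ → Finset ℕ}
    (hA' : ∀ i ∈ N, A' i = A i) (hf : f N A C k W) : f N A' C k W :=
  hMon N A C k W A' hf fun i hi => by simp [hA' i hi]

theorem IndepOfLosers.restrict (hIoL : IndepOfLosers f) (hMon : MonotoneInWinners f)
    {D : Finset ℕ} (hWD : W ⊆ D) (hDC : D ⊆ C) (hAC : ∀ i ∈ N, A i ⊆ C)
    (hf : f N A C k W) : f N (fun i => A i ∩ D) D k W := by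
  induction C using Finset.strongInduction generalizing A with
  | H C ih =>
    by_cases hCD : C ⊆ D
    · obtain rfl := hDC.antisymm hCD
      exact hMon.congr (fun i hi => inter_eq_left.mpr (hAC i hi)) hf
    · obtain ⟨c, hcC, hcD⟩ := not_subset.mp hCD
      have hDC' : D ⊆ C.erase c := fun x hx => mem_erase.mpr ⟨by grind, hDC hx⟩
      have hf' := hIoL N A C k W hf c hcC fun hcW => hcD (hWD hcW)
      refine hMon.congr (fun i _ => ?_)
        (ih _ (erase_ssubset hcC) hDC' (fun i _ => inter_subset_right) hf')
      rw [inter_assoc, inter_eq_right.mpr hDC']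

theorem RobustToSatisfied.clear_outside (hRob : RobustToSatisfied f) (N' : Finset ℕ)
    (hf : f N A C k W) : f N (fun i => if i ∈ N' then A i else ∅) C k W :=
  hRob N A C k W _ hf fun i _ => by by_cases hi : i ∈ N' <;> simp [hi]

theorem IndepOfSwaps.replace_winners (hSwap : IndepOfSwaps f) (hMon : MonotoneInWinners f)
    {T : ℕ → Finset ℕ} (hTW : ∀ i ∈ N, T i ⊆ W) (hAT : ∀ i ∈ N, #(A i ∩ W) ≤ #(T i))
    (hf : f N A C k W) : f N (fun i => A i \ W ∪ T i) C k W := by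
  choose! S hST hS using fun i (hi : i ∈ N) => exists_subset_card_eq (hAT i hi)
  have hSW : ∀ i ∈ N, S i ⊆ W := fun i hi => (hST i hi).trans (hTW i hi)
  have hswap : f N (fun i => A i \ W ∪ S i) C k W := by
    refine hSwap N A C k W _ hf fun i hi => ⟨?_, ?_⟩
    · rw [union_sdiff_distrib, Finset.sdiff_idem, sdiff_eq_empty_iff_subset.mpr (hSW i hi),
        union_empty]
    · rw [union_inter_distrib_right, sdiff_inter_self, empty_union,
        inter_eq_left.mpr (hSW i hi), hS i hi]
  refine hMon N _ C k W _ hswap fun i hi => ⟨union_subset_union_right (hST i hi), ?_⟩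
  intro x hx
  simp only [mem_sdiff, mem_union] at hx
  exact hTW i hi (by tauto)

theorem partyProfile_of_underrepresented (hIoL : IndepOfLosers f) (hMon : MonotoneInWinners f)
    (hRob : RobustToSatisfied f) (hSwap : IndepOfSwaps f) {N' T : Finset ℕ} {c : ℕ}
    (hcC : c ∈ C) (hcW : c ∉ W) (hWC : W ⊆ C) (hTW : T ⊆ W) (hAC : ∀ i ∈ N, A i ⊆ C)
    (hcA : ∀ i ∈ N', c ∈ A i) (hAT : ∀ i ∈ N', #(A i ∩ W) ≤ #T) (hf : f N A C k W) :
    f N (fun i => if i ∈ N' then insert c T else W \ T) (insert c W) k W := by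
  have hrestrict := hIoL.restrict hMon (subset_insert c W) (insert_subset hcC hWC) hAC hf
  have hcleared := hRob.clear_outside N' hrestrict
  have hswapped := hSwap.replace_winners hMon (T := fun i => if i ∈ N' then T else W \ T)
    (fun i _ => by split_ifs; exacts [hTW, sdiff_subset]) (fun i _ => by
      split_ifs with hi
      · simpa [inter_assoc, inter_eq_right.mpr (subset_insert c W)] using hAT i hi
      · simp) hcleared
  refine hMon.congr (fun i _ => ?_) hswapped
  by_cases hi : i ∈ N'
  · have := hcA i hi
    ext x; simp only [hi, if_true, mem_insert, mem_union, mem_sdiff, mem_inter]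
    grind
  · simp [hi]

end ProportionalityNotion

theorem isPartyList_ite {N N' X Y : Finset ℕ} (hX : X.Nonempty) (hY : Y.Nonempty)
    (hXY : Disjoint X Y) :
    IsPartyList N (X ∪ Y) (fun i => if i ∈ N' then X else Y) {X, Y} := by
  refine ⟨by simp [hX, hY], ?_, by simp, fun i _ => by by_cases hi : i ∈ N' <;> simp [hi]⟩
  simp only [mem_insert, mem_singleton]
  rintro p (rfl | rfl) q (rfl | rfl) hpq
  exacts [absurd rfl hpq, hXY, hXY.symm, absurd rfl hpq]

theorem filter_ite_eq_left {N N' X Y : Finset ℕ} (hN' : N' ⊆ N) (hXY : X ≠ Y) :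
    N.filter (fun i => (if i ∈ N' then X else Y) = X) = N' := by
  ext i
  by_cases hi : i ∈ N'
  · simp [hi, hN' hi]
  · simp [hi, hXY.symm]

/-- Any proportionality notion satisfying independence of losers, monotonicity,
robustness to fully satisfied voters, independence of approval swaps, and
lower quota for party-lists is a refinement of EJR+. -/
theorem refinement_of_ejrplus
    (f : Finset ℕ → (ℕ → Finset ℕ) → Finset ℕ → ℕ → Finset ℕ → Prop)
    (hIoL : ∀ N A C k W, f N A C k W → ∀ c ∈ C, c ∉ W →
      f N (fun i => A i ∩ C.erase c) (C.erase c) k W)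
    (hMon : ∀ N A C k W A', f N A C k W →
      (∀ i ∈ N, A i ⊆ A' i ∧ A' i \ A i ⊆ W) → f N A' C k W)
    (hRob : ∀ N A C k W A', f N A C k W →
      (∀ i ∈ N, A' i = A i ∨ A' i ⊆ A i ∩ W) → f N A' C k W)
    (hSwap : ∀ N A C k W A', f N A C k W →
      (∀ i ∈ N, A' i \ W = A i \ W ∧ (A' i ∩ W).card = (A i ∩ W).card) →
      f N A' C k W)
    (hLQ : ∀ N A C k P W, IsPartyList N C A P → f N A C k W → LowerQuota N A k P W) :
    ∀ N A C k W, N.Nonempty → (∀ i ∈ N, A i ⊆ C) → W ⊆ C → W.card = k →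
      f N A C k W → EJRplus N A k W := by
  intro N A C k W hN hAC hWC hWk hf ℓ hℓ hℓk c hcW N' hN'N hcA hlarge
  by_contra! hfew
  have hquota : ℓ ≤ k * #N' / #N :=
    (Nat.le_div_iff_mul_le hN.card_pos).mpr (by rw [mul_comm k]; exact hlarge)
  obtain ⟨i₀, hi₀⟩ : N'.Nonempty := by
    rw [← card_pos, Nat.pos_iff_ne_zero]
    rintro hN'
    simp [hN'] at hquota
    omega
  obtain ⟨T, hTW, hT⟩ := exists_subset_card_eq (show ℓ - 1 ≤ #W by omega)
  have hcT : c ∉ T := fun hcT => hcW (hTW hcT)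
  have hparty := ProportionalityNotion.partyProfile_of_underrepresented hIoL hMon hRob hSwap
    (hAC i₀ (hN'N hi₀) (hcA i₀ hi₀)) hcW hWC hTW hAC hcA
    (fun i hi => hT ▸ Nat.le_sub_one_of_lt (hfew i hi)) hf
  have hpartyList : IsPartyList N (insert c W) (fun i => if i ∈ N' then insert c T else W \ T)
      {insert c T, W \ T} := by
    have := isPartyList_ite (N := N) (N' := N') (insert_nonempty c T)
      (by rw [← card_pos, card_sdiff_of_subset hTW]; omega)
      (disjoint_insert_left.mpr ⟨by simp [hcW], disjoint_sdiff⟩)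
    rwa [insert_union, union_sdiff_of_subset hTW] at this
  have hLQc := hLQ _ _ _ _ _ _ hpartyList hparty (insert c T) (mem_insert_self _ _)
  rw [filter_ite_eq_left hN'N
    (fun h => hcW (mem_sdiff.mp (h ▸ mem_insert_self c T)).1), inter_insert_of_notMem hcW,
    inter_eq_right.mpr hTW, card_insert_of_notMem hcT] at hLQc
  omega
end

section
/- If a proportionality notion f refines PJR+ and satisfies independence of approval swaps, then f refines EJR+. -/
open Finset


/-!
Given a committee `W`, fix an enumeration of `W` and let each voter's approvals inside `W` be swapped
for the same number of leading members of that enumeration. This is an approval swap, so `W` stays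
selected by `f` and hence satisfies PJR+ for the swapped profile. There the approval sets inside `W`
form a chain, so the union over a group of voters is as large as its largest member: PJR+ for the
swapped profile is EJR+ for the original one.
-/

namespace Finset

variable {α : Type*} [DecidableEq α]

noncomputable def initialPart (W : Finset α) (n : ℕ) : Finset α :=
  (W.toList.take n).toFinset

theorem initialPart_subset (W : Finset α) (n : ℕ) : W.initialPart n ⊆ W := fun _ hx =>
  mem_toList.1 (List.mem_of_mem_take (List.mem_toFinset.1 hx))

theorem card_initialPart (W : Finset α) (n : ℕ) : #(W.initialPart n) = min n #W := by
  rw [initialPart, List.toFinset_card_of_nodup ((nodup_toList W).sublist (List.take_sublist _ _)),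
    List.length_take, length_toList]

theorem initialPart_mono (W : Finset α) {m n : ℕ} (h : m ≤ n) :
    W.initialPart m ⊆ W.initialPart n := fun _ hx =>
  List.mem_toFinset.2 (List.take_subset_take_left _ h (List.mem_toFinset.1 hx))

theorem card_biUnion_initialPart_le {ι : Type*} (W : Finset α) (s : Finset ι) (g : ι → ℕ)
    {m : ℕ} (hg : ∀ i ∈ s, g i ≤ m) : #(s.biUnion fun i => W.initialPart (g i)) ≤ m :=
  calc #(s.biUnion fun i => W.initialPart (g i))
      _ ≤ #(W.initialPart m) :=
        card_le_card (biUnion_subset.2 fun i hi => W.initialPart_mono (hg i hi))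
      _ ≤ m := (W.card_initialPart m).trans_le (min_le_left _ _)

end Finset

section NestedSwap

variable {α ι : Type*} [DecidableEq α]

noncomputable def nestedSwap (W : Finset α) (A : ι → Finset α) (i : ι) : Finset α :=
  A i \ W ∪ W.initialPart #(A i ∩ W)

theorem nestedSwap_sdiff (W : Finset α) (A : ι → Finset α) (i : ι) :
    nestedSwap W A i \ W = A i \ W := by
  rw [nestedSwap, union_sdiff_distrib, _root_.sdiff_idem,
    sdiff_eq_empty_iff_subset.2 (W.initialPart_subset _), union_empty]

theorem nestedSwap_inter (W : Finset α) (A : ι → Finset α) (i : ι) :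
    nestedSwap W A i ∩ W = W.initialPart #(A i ∩ W) := by
  rw [nestedSwap, union_inter_distrib_right, sdiff_inter_self, empty_union,
    inter_eq_left.2 (W.initialPart_subset _)]

theorem card_nestedSwap_inter (W : Finset α) (A : ι → Finset α) (i : ι) :
    #(nestedSwap W A i ∩ W) = #(A i ∩ W) := by
  rw [nestedSwap_inter, card_initialPart, min_eq_left (card_le_card inter_subset_right)]

end NestedSwap

theorem EJRplus.of_pjrplus_nestedSwap {N : Finset ℕ} {A : ℕ → Finset ℕ} {k : ℕ} {W : Finset ℕ}
    (h : PJRplus N (nestedSwap W A) k W) : EJRplus N A k W := by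
  intro ℓ hℓ hℓk c hc N' hN' hcN' hlarge
  by_contra! hsmall
  have hc' : ∀ i ∈ N', c ∈ nestedSwap W A i := fun i hi =>
    (mem_sdiff.1 ((nestedSwap_sdiff W A i).symm ▸ mem_sdiff.2 ⟨hcN' i hi, hc⟩)).1
  have hunion := h ℓ hℓ hℓk c hc N' hN' hc' hlarge
  simp only [nestedSwap_inter] at hunion
  have := W.card_biUnion_initialPart_le N' (fun i => #(A i ∩ W)) (m := ℓ - 1)
    fun i hi => Nat.le_sub_one_of_lt (hsmall i hi)
  omega

/-- If a proportionality notion refines PJR+ and satisfies independence of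
approval swaps, then it refines EJR+. -/
theorem pjrplus_refinement_swaps_refines_ejrplus
    (f : Finset ℕ → (ℕ → Finset ℕ) → Finset ℕ → ℕ → Finset ℕ → Prop)
    (hPJRp : ∀ N A C k W, f N A C k W → PJRplus N A k W)
    (hSwap : ∀ N A C k W A', f N A C k W →
      (∀ i ∈ N, A' i \ W = A i \ W ∧ (A' i ∩ W).card = (A i ∩ W).card) →
      f N A' C k W) :
    ∀ N A C k W, f N A C k W → EJRplus N A k W := by
  intro N A C k W hf
  have hf' : f N (nestedSwap W A) C k W :=
    hSwap N A C k W _ hf fun i _ => ⟨nestedSwap_sdiff W A i, card_nestedSwap_inter W A i⟩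
  exact .of_pjrplus_nestedSwap (hPJRp N _ C k W hf')
end

section
/- The natural witness function of EJR+ is a valid witness function: (i) W satisfies EJR+ in I iff the set of natural witnesses is empty, and (ii) natural witnesses are preserved under local embeddings into instances with the same number of voters. -/
open Finset


/-- `(N', W)` (with profile `A`) locally embeds into `(N₂', W₂)` (with profile `A₂`):
there are a bijection `φN : N' → N₂'` and an injection
`φC : W ∪ ⋃_{i∈N'} A_i → W₂ ∪ ⋃_{i∈N₂'} A₂_i` mapping `W` onto `W₂` and preserving
approvals of voters in `N'`. -/
def LocallyEmbeds (N' : Finset ℕ) (A : ℕ → Finset ℕ) (W : Finset ℕ)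
    (N₂' : Finset ℕ) (A₂ : ℕ → Finset ℕ) (W₂ : Finset ℕ) : Prop :=
  ∃ φN φC : ℕ → ℕ,
    Set.BijOn φN ↑N' ↑N₂' ∧
    Set.InjOn φC ↑(W ∪ N'.biUnion A) ∧
    Set.MapsTo φC ↑(W ∪ N'.biUnion A) ↑(W₂ ∪ N₂'.biUnion A₂) ∧
    W.image φC = W₂ ∧
    ∀ j ∈ N', ∀ c ∈ W ∪ N'.biUnion A, (c ∈ A j ↔ φC c ∈ A₂ (φN j))

/-- `N'` is a natural witness of an EJR+ violation of `W` in `(N, A, C, k)`: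
there are `ℓ ∈ [k]` and `c ∈ C \\ W` with `N' ⊆ N_c`, `|N'| ≥ ℓ·n/k`, and
`|A_i ∩ W| < ℓ` for all `i ∈ N'`. -/
def NaturalEJRplusWitness (N C : Finset ℕ) (A : ℕ → Finset ℕ) (k : ℕ) (W : Finset ℕ)
    (N' : Finset ℕ) : Prop :=
  ∃ ℓ : ℕ, 1 ≤ ℓ ∧ ℓ ≤ k ∧ ∃ c ∈ C, c ∉ W ∧ N' ⊆ N ∧ (∀ i ∈ N', c ∈ A i) ∧
    ℓ * N.card ≤ N'.card * k ∧ ∀ i ∈ N', (A i ∩ W).card < ℓ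

/-! A natural witness is exactly a group violating EJR+; such a group is nonempty since
`n > 0` and `ℓ ≥ 1`, so its common candidate lies in `C`. Under a local embedding the group keeps
its size, its common candidate `c ∉ W` goes to a common candidate `φC c ∉ φC(W) = W₂` by
injectivity, and `A₂ (φN j) ∩ W₂ ⊆ φC(A j ∩ W)` keeps each voter below `ℓ`; with `n₂ = n` the
largeness condition is unchanged. -/

theorem nonempty_of_mul_card_le_card_mul {N N' : Finset ℕ} {ℓ k : ℕ} (hN : N.Nonempty)
    (hℓ : 1 ≤ ℓ) (hsize : ℓ * #N ≤ #N' * k) : N'.Nonempty :=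
  card_pos.mp (Nat.pos_of_mul_pos_right ((Nat.mul_pos hℓ (card_pos.mpr hN)).trans_le hsize))

theorem mem_of_forall_mem_of_nonempty {N N' C : Finset ℕ} {A : ℕ → Finset ℕ} {c : ℕ}
    (hN' : N'.Nonempty) (hN'N : N' ⊆ N) (hAC : ∀ i ∈ N, A i ⊆ C) (happ : ∀ i ∈ N', c ∈ A i) :
    c ∈ C :=
  let ⟨i, hi⟩ := hN'
  hAC i (hN'N hi) (happ i hi)

theorem ejrplus_iff_forall_not_naturalEJRplusWitness {N C : Finset ℕ} {A : ℕ → Finset ℕ}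
    {k : ℕ} {W : Finset ℕ} (hN : N.Nonempty) (hAC : ∀ i ∈ N, A i ⊆ C) :
    EJRplus N A k W ↔ ∀ N', ¬ NaturalEJRplusWitness N C A k W N' := by
  constructor
  · rintro hE N' ⟨ℓ, hℓ1, hℓk, c, -, hcW, hN'N, happ, hsize, hsmall⟩
    obtain ⟨i, hi, hge⟩ := hE ℓ hℓ1 hℓk c hcW N' hN'N happ hsize
    exact (hsmall i hi).not_ge hge
  · intro h ℓ hℓ1 hℓk c hcW N' hN'N happ hsize
    by_contra! hsmall
    have hcC : c ∈ C :=
      mem_of_forall_mem_of_nonempty (nonempty_of_mul_card_le_card_mul hN hℓ1 hsize) hN'N hAC happ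
    exact h N' ⟨ℓ, hℓ1, hℓk, c, hcC, hcW, hN'N, happ, hsize, hsmall⟩

section LocalEmbedding

variable {D W B B₂ : Finset ℕ} {φC : ℕ → ℕ}

theorem notMem_image_of_injOn (hinj : Set.InjOn φC D) (hWD : W ⊆ D) {c : ℕ} (hcD : c ∈ D)
    (hcW : c ∉ W) : φC c ∉ W.image φC := by
  rw [← mem_coe, coe_image, hinj.mem_image_iff (coe_subset.mpr hWD) hcD]
  exact hcW

theorem card_inter_image_le (happ : ∀ c ∈ W, φC c ∈ B₂ → c ∈ B) :
    #(B₂ ∩ W.image φC) ≤ #(B ∩ W) := by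
  calc #(B₂ ∩ W.image φC) ≤ #((B ∩ W).image φC) := by
        refine card_le_card fun x hx => ?_
        obtain ⟨hxB₂, hxW⟩ := mem_inter.mp hx
        obtain ⟨c, hcW, rfl⟩ := mem_image.mp hxW
        exact mem_image_of_mem φC (mem_inter.mpr ⟨happ c hcW hxB₂, hcW⟩)
    _ ≤ #(B ∩ W) := card_image_le

end LocalEmbedding

theorem NaturalEJRplusWitness.of_locallyEmbeds {N C W N' : Finset ℕ} {A : ℕ → Finset ℕ}
    {k : ℕ} {N₂ C₂ W₂ N₂' : Finset ℕ} {A₂ : ℕ → Finset ℕ} (hN : N.Nonempty)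
    (hcard : #N₂ = #N) (hN₂' : N₂' ⊆ N₂) (hA₂C₂ : ∀ i ∈ N₂, A₂ i ⊆ C₂)
    (hwit : NaturalEJRplusWitness N C A k W N') (hemb : LocallyEmbeds N' A W N₂' A₂ W₂) :
    NaturalEJRplusWitness N₂ C₂ A₂ k W₂ N₂' := by
  obtain ⟨ℓ, hℓ1, hℓk, c, -, hcW, hN'N, happ, hsize, hsmall⟩ := hwit
  obtain ⟨φN, φC, hbij, hinj, -, rfl, hiff⟩ := hemb
  have hN' : N'.Nonempty := nonempty_of_mul_card_le_card_mul hN hℓ1 hsize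
  have ⟨i₀, hi₀⟩ := hN'
  have hcD : c ∈ W ∪ N'.biUnion A := mem_union_right _ (mem_biUnion.mpr ⟨i₀, hi₀, happ i₀ hi₀⟩)
  have hcard' : #N' = #N₂' := card_nbij φN hbij.mapsTo hbij.injOn hbij.surjOn
  have happ₂ : ∀ j₂ ∈ N₂', φC c ∈ A₂ j₂ := by
    intro j₂ hj₂
    obtain ⟨j, hj, rfl⟩ := hbij.surjOn hj₂
    exact (hiff j hj c hcD).mp (happ j hj)
  have hN₂'ne : N₂'.Nonempty := card_pos.mp (hcard' ▸ card_pos.mpr hN')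
  refine ⟨ℓ, hℓ1, hℓk, φC c, mem_of_forall_mem_of_nonempty hN₂'ne hN₂' hA₂C₂ happ₂,
    notMem_image_of_injOn hinj subset_union_left hcD hcW, hN₂', happ₂, ?_, ?_⟩
  · rwa [hcard, ← hcard']
  · intro j₂ hj₂
    obtain ⟨j, hj, rfl⟩ := hbij.surjOn hj₂
    exact (card_inter_image_le fun w hw =>
      (hiff j hj w (mem_union_left _ hw)).mpr).trans_lt (hsmall j hj)

/-- The natural witness function of EJR+ is a valid witness function:
(i) `W` satisfies EJR+ iff there is no natural witness, and (ii) natural witnesses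
are preserved under local embeddings into instances with the same number of voters. -/
theorem ejrplus_natural_witness_is_witness_function :
    (∀ (N C : Finset ℕ) (A : ℕ → Finset ℕ) (k : ℕ) (W : Finset ℕ),
      N.Nonempty → (∀ i ∈ N, A i ⊆ C) → W ⊆ C →
      (EJRplus N A k W ↔ ∀ N' : Finset ℕ, ¬ NaturalEJRplusWitness N C A k W N')) ∧
    (∀ (N C : Finset ℕ) (A : ℕ → Finset ℕ) (k : ℕ) (W : Finset ℕ) (N' : Finset ℕ)
        (N₂ C₂ : Finset ℕ) (A₂ : ℕ → Finset ℕ) (W₂ : Finset ℕ) (N₂' : Finset ℕ),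
      N.Nonempty → N₂.card = N.card → N₂' ⊆ N₂ → (∀ i ∈ N₂, A₂ i ⊆ C₂) →
      NaturalEJRplusWitness N C A k W N' →
      LocallyEmbeds N' A W N₂' A₂ W₂ →
      NaturalEJRplusWitness N₂ C₂ A₂ k W₂ N₂') :=
  ⟨fun _ _ _ _ _ hN hAC _ => ejrplus_iff_forall_not_naturalEJRplusWitness hN hAC,
    fun _ _ _ _ _ _ _ _ _ _ _ hN hcard hN₂' hA₂C₂ hwit hemb =>
      hwit.of_locallyEmbeds hN hcard hN₂' hA₂C₂ hemb⟩
end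

section
/- Every witness-based proportionality notion satisfies independence of losers; if moreover the witness function is cohesiveness-based, the notion satisfies robustness to fully satisfied voters. -/
open Finset

/- In both cases every witness `N'` against `W` in the modified instance
has, on `W ∪ ⋃_{i∈N'} A_i`, the same approvals as in the original instance, so the identity
maps are a local embedding and `N'` is also a witness against `W` in the original instance.
For robustness, cohesiveness gives a candidate `c ∉ W` approved by all of `N'`, so no voter
of `N'` can have had its ballot shrunk into `W`. -/

theorem locallyEmbeds_self_of_agree {N' : Finset ℕ} {A A₂ : ℕ → Finset ℕ} {W : Finset ℕ}
    (hagree : ∀ j ∈ N', ∀ c ∈ W ∪ N'.biUnion A, c ∈ A j ↔ c ∈ A₂ j) :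
    LocallyEmbeds N' A W N' A₂ W := by
  refine ⟨id, id, Set.bijOn_id _, Set.injOn_id _, ?_, image_id, hagree⟩
  intro c hc
  have hc' := mem_coe.mp hc
  rcases mem_union.mp hc' with hcW | hcA
  · exact mem_union_left _ hcW
  · obtain ⟨i, hi, hci⟩ := mem_biUnion.mp hcA
    exact mem_union_right _ (mem_biUnion.mpr ⟨i, hi, (hagree i hi c hc').mp hci⟩)

section WitnessBased

variable (f : Finset ℕ → (ℕ → Finset ℕ) → Finset ℕ → ℕ → Finset ℕ → Prop)
    (w : Finset ℕ → (ℕ → Finset ℕ) → Finset ℕ → ℕ → Finset ℕ → Finset ℕ → Prop)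
    (hval : ∀ N A C k W N', w N A C k W N' → N'.Nonempty ∧ N' ⊆ N)
    (hiff : ∀ N A C k W, f N A C k W ↔ ∀ N', ¬ w N A C k W N')
    (hemb : ∀ N A C k W N' N₂ A₂ C₂ W₂ N₂',
      w N A C k W N' → N₂.card = N.card → N₂' ⊆ N₂ →
      LocallyEmbeds N' A W N₂' A₂ W₂ → w N₂ A₂ C₂ k W₂ N₂')
include hval hiff hemb

theorem holds_of_witnesses_agree {N : Finset ℕ} {A A₂ : ℕ → Finset ℕ} {C C₂ : Finset ℕ} {k : ℕ}
    {W : Finset ℕ}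
    (hagree : ∀ N', w N A C k W N' → ∀ j ∈ N', ∀ c ∈ W ∪ N'.biUnion A, c ∈ A j ↔ c ∈ A₂ j)
    (hf : f N A₂ C₂ k W) : f N A C k W := by
  rw [hiff] at hf ⊢
  intro N' hw
  exact hf N' (hemb _ _ _ _ _ _ _ _ _ _ _ hw rfl (hval _ _ _ _ _ _ hw).2
    (locallyEmbeds_self_of_agree (hagree N' hw)))

theorem holds_erase_loser {N : Finset ℕ} {A : ℕ → Finset ℕ} {C : Finset ℕ} {k : ℕ}
    {W : Finset ℕ} (hWC : W ⊆ C) (hf : f N A C k W) {c : ℕ} (hcW : c ∉ W) :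
    f N (fun i => A i ∩ C.erase c) (C.erase c) k W := by
  refine holds_of_witnesses_agree f w hval hiff hemb (fun N' _ j _ d hd => ?_) hf
  suffices d ∈ C.erase c by simp [this]
  rcases mem_union.mp hd with hdW | hdA
  · exact mem_erase.mpr ⟨fun h => hcW (h ▸ hdW), hWC hdW⟩
  · obtain ⟨i, _, hdi⟩ := mem_biUnion.mp hdA
    exact (mem_inter.mp hdi).2

theorem holds_of_fully_satisfied
    (hcoh : ∀ N A C k W N', w N A C k W N' → ∃ c, c ∉ W ∧ ∀ i ∈ N', c ∈ A i)
    {N : Finset ℕ} {A A' : ℕ → Finset ℕ} {C : Finset ℕ} {k : ℕ} {W : Finset ℕ}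
    (hf : f N A C k W) (hA' : ∀ i ∈ N, A' i = A i ∨ A' i ⊆ A i ∩ W) : f N A' C k W := by
  refine holds_of_witnesses_agree f w hval hiff hemb (fun N' hw j hj d _ => ?_) hf
  obtain ⟨c, hcW, hcA⟩ := hcoh _ _ _ _ _ _ hw
  rcases hA' j ((hval _ _ _ _ _ _ hw).2 hj) with h | h
  · rw [h]
  · exact absurd (mem_inter.mp (h (hcA j hj))).2 hcW

end WitnessBased

/-- Every witness-based proportionality notion satisfies independence of losers;
if moreover the witness function is cohesiveness-based, the notion also satisfies
robustness to fully satisfied voters. -/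
theorem witnessBased_iol_and_robustness
    (f : Finset ℕ → (ℕ → Finset ℕ) → Finset ℕ → ℕ → Finset ℕ → Prop)
    (w : Finset ℕ → (ℕ → Finset ℕ) → Finset ℕ → ℕ → Finset ℕ → Finset ℕ → Prop)
    (hval : ∀ N A C k W N', w N A C k W N' → N'.Nonempty ∧ N' ⊆ N)
    (hiff : ∀ N A C k W, f N A C k W ↔ ∀ N', ¬ w N A C k W N')
    (hemb : ∀ N A C k W N' N₂ A₂ C₂ W₂ N₂',
      w N A C k W N' → N₂.card = N.card → N₂' ⊆ N₂ →
      LocallyEmbeds N' A W N₂' A₂ W₂ → w N₂ A₂ C₂ k W₂ N₂') :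
    (∀ N A C k W, (∀ i ∈ N, A i ⊆ C) → W ⊆ C → f N A C k W →
      ∀ c ∈ C, c ∉ W → f N (fun i => A i ∩ C.erase c) (C.erase c) k W) ∧
    ((∀ N A C k W N', w N A C k W N' → ∃ c, c ∉ W ∧ ∀ i ∈ N', c ∈ A i) →
      ∀ N A C k W A', (∀ i ∈ N, A i ⊆ C) → W ⊆ C → f N A C k W →
        (∀ i ∈ N, A' i = A i ∨ A' i ⊆ A i ∩ W) → f N A' C k W) :=
  ⟨fun _ _ _ _ _ _ hWC hf _ _ hcW => holds_erase_loser f w hval hiff hemb hWC hf hcW,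
   fun hcoh _ _ _ _ _ _ _ _ hf hA' => holds_of_fully_satisfied f w hval hiff hemb hcoh hf hA'⟩
end

section
/- Let f be a lower quota extension with witness function w such that (f, w) is cohesiveness-based and satisfies individual discontentment. Then every committee satisfying EJR+ is in f(I) for all instances I (i.e., EJR+ refines f). -/
/-!
Suppose `f` rejects a committee `W` satisfying EJR+, and let `N'` be a witness. By
cohesiveness all of `N'` approve some `c ∉ W`, so EJR+ with `ℓ = ⌊k |N'| / n⌋` yields a
voter `j ∈ N'` with `|A_j ∩ W| ≥ ℓ`. By individual discontentment `N'` is still a witness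
after every member of `N'` adopts the ballot `A_j`. Now let everybody outside `N'` vote for
`W \ A_j` (or for `A_j` as well, when `W ⊆ A_j`): this is a party-list instance on which `W`
satisfies lower quota, and into which `N'` embeds locally, so `N'` witnesses against `W`
there as well, contradicting that `f` extends lower quota.
-/

open Finset


lemma locallyEmbeds_self_of_eqOn {N' W : Finset ℕ} {A A₂ : ℕ → Finset ℕ}
    (h : ∀ i ∈ N', A i = A₂ i) : LocallyEmbeds N' A W N' A₂ W := by
  have hcand : W ∪ N'.biUnion A = W ∪ N'.biUnion A₂ := by
    rw [biUnion_congr rfl h]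
  refine ⟨id, id, Set.bijOn_id _, Set.injOn_id _, ?_, image_id, ?_⟩
  · rw [hcand]
    exact Set.mapsTo_id _
  · intro i hi c _
    simp [h i hi]

lemma EJRplus.exists_mem_le_card_inter {N N' W : Finset ℕ} {A : ℕ → Finset ℕ} {k c : ℕ}
    (hEJR : EJRplus N A k W) (hcW : c ∉ W) (hN' : N' ⊆ N) (hc : ∀ i ∈ N', c ∈ A i)
    (hN'ne : N'.Nonempty) : ∃ j ∈ N', k * N'.card / N.card ≤ (A j ∩ W).card := by
  rcases Nat.eq_zero_or_pos (k * N'.card / N.card) with hzero | hpos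
  · obtain ⟨j, hj⟩ := hN'ne
    exact ⟨j, hj, hzero ▸ Nat.zero_le _⟩
  · have hle : k * N'.card / N.card ≤ k := by
      apply Nat.div_le_of_le_mul
      rw [mul_comm]
      exact Nat.mul_le_mul_right _ (card_le_card hN')
    refine hEJR _ hpos hle c hcW N' hN' hc ?_
    rw [mul_comm N'.card]
    exact Nat.div_mul_le_self _ _

lemma isPartyList_const (N : Finset ℕ) {a : Finset ℕ} (ha : a.Nonempty) :
    IsPartyList N a (fun _ => a) {a} := by
  refine ⟨?_, ?_, by simp, fun _ _ => mem_singleton_self a⟩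
  · simpa using ha
  · simp

lemma lowerQuota_const {N W a : Finset ℕ} (hN : N.Nonempty) (hWa : W ⊆ a) :
    LowerQuota N (fun _ => a) W.card {a} W := by
  intro p hp
  rw [mem_singleton.mp hp, filter_true_of_mem (fun _ _ => rfl),
    Nat.mul_div_cancel _ (card_pos.mpr hN), inter_eq_left.mpr hWa]
  exact min_le_left _ _

lemma isPartyList_ite_s14 (N N' : Finset ℕ) {a b : Finset ℕ} (ha : a.Nonempty) (hb : b.Nonempty)
    (hab : Disjoint a b) :
    IsPartyList N (a ∪ b) (fun i => if i ∈ N' then a else b) {a, b} := by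
  refine ⟨?_, ?_, by simp, fun i _ => ?_⟩
  · simp [ha, hb]
  · simp only [mem_insert, mem_singleton]
    rintro p (rfl | rfl) q (rfl | rfl) hpq
    · exact absurd rfl hpq
    · exact hab
    · exact hab.symm
    · exact absurd rfl hpq
  · dsimp only
    split_ifs <;> simp

lemma lowerQuota_ite {N N' W a b : Finset ℕ} {k : ℕ} (hN' : N' ⊆ N) (hab : a ≠ b)
    (ha : k * N'.card / N.card ≤ (W ∩ a).card) (hbW : b ⊆ W) :
    LowerQuota N (fun i => if i ∈ N' then a else b) k {a, b} W := by
  simp only [LowerQuota, mem_insert, mem_singleton, forall_eq_or_imp, forall_eq]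
  constructor
  · have hsupp : N.filter (fun i => (if i ∈ N' then a else b) = a) = N' := by
      ext i
      by_cases hi : i ∈ N'
      · simp [hi, hN' hi]
      · simp [hi, hab.symm]
    rw [hsupp]
    exact min_le_of_left_le ha
  · rw [inter_eq_right.mpr hbW]
    exact min_le_right _ _

lemma exists_isPartyList_lowerQuota {N N' W a : Finset ℕ} {k : ℕ} (hN : N.Nonempty)
    (hN' : N' ⊆ N) (haW : ¬ a ⊆ W) (hquota : k * N'.card / N.card ≤ (W ∩ a).card)
    (hWk : W.card = k) :
    ∃ (A₂ : ℕ → Finset ℕ) (C₂ : Finset ℕ) (P : Finset (Finset ℕ)),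
      (∀ i ∈ N', A₂ i = a) ∧ IsPartyList N C₂ A₂ P ∧ W ⊆ C₂ ∧ LowerQuota N A₂ k P W := by
  obtain ⟨c, hca, -⟩ := not_subset.mp haW
  have ha : a.Nonempty := ⟨c, hca⟩
  by_cases hWa : W ⊆ a
  · subst hWk
    exact ⟨_, _, _, fun _ _ => rfl, isPartyList_const N ha, hWa, lowerQuota_const hN hWa⟩
  · have hab : a ≠ W \ a := fun h => haW (h ▸ sdiff_subset)
    refine ⟨_, _, _, fun i hi => if_pos hi,
      isPartyList_ite_s14 N N' ha (sdiff_nonempty.mpr hWa) disjoint_sdiff, ?_,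
      lowerQuota_ite hN' hab hquota sdiff_subset⟩
    rw [union_sdiff_self_eq_union]
    exact subset_union_right

/-- Let `f` be a lower quota extension with a witness function `w` such that
`(f, w)` is cohesiveness-based and satisfies individual discontentment.
Then EJR+ refines `f`: every committee satisfying EJR+ is selected by `f`. -/
theorem ejrplus_refines_f
    (f : Finset ℕ → (ℕ → Finset ℕ) → Finset ℕ → ℕ → Finset ℕ → Prop)
    (w : Finset ℕ → (ℕ → Finset ℕ) → Finset ℕ → ℕ → Finset ℕ → Finset ℕ → Prop)
    (hval : ∀ N A C k W N', w N A C k W N' → N'.Nonempty ∧ N' ⊆ N)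
    (hiff : ∀ N A C k W, f N A C k W ↔ ∀ N', ¬ w N A C k W N')
    (hemb : ∀ N A C k W N' N₂ A₂ C₂ W₂ N₂',
      w N A C k W N' → N₂.card = N.card → N₂' ⊆ N₂ →
      LocallyEmbeds N' A W N₂' A₂ W₂ → w N₂ A₂ C₂ k W₂ N₂')
    (hcoh : ∀ N A C k W N', w N A C k W N' → ∃ c, c ∉ W ∧ ∀ i ∈ N', c ∈ A i)
    (hLQE : ∀ N A C k P W, IsPartyList N C A P → N.Nonempty → W ⊆ C → W.card = k →
      (f N A C k W ↔ LowerQuota N A k P W))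
    (hid : ∀ N A C k W N', w N A C k W N' → ∀ j ∈ N',
      w N (fun i => if i ∈ N' then A j else A i) C k W N') :
    ∀ N A C k W, N.Nonempty → (∀ i ∈ N, A i ⊆ C) → W ⊆ C → W.card = k →
      EJRplus N A k W → f N A C k W := by
  intro N A C k W hN _ _ hWk hEJR
  rw [hiff]
  intro N' hw
  obtain ⟨hN'ne, hN'N⟩ := hval _ _ _ _ _ _ hw
  obtain ⟨c, hcW, hc⟩ := hcoh _ _ _ _ _ _ hw
  obtain ⟨j, hj, hjquota⟩ := hEJR.exists_mem_le_card_inter hcW hN'N hc hN'ne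
  obtain ⟨A₂, C₂, P, hA₂, hP, hWC₂, hLQ⟩ := exists_isPartyList_lowerQuota (a := A j) hN hN'N
    (fun h => hcW (h (hc j hj))) (by rwa [inter_comm]) hWk
  have hw₂ : w N A₂ C₂ k W N' :=
    hemb _ _ _ _ _ _ _ _ _ _ _ (hid _ _ _ _ _ _ hw j hj) rfl hN'N
      (locallyEmbeds_self_of_eqOn fun i hi => by simp [hi, hA₂ i hi])
  exact (hiff _ _ _ _ _).mp ((hLQE _ _ _ _ _ _ hP hN hWC₂ hWk).mpr hLQ) N' hw₂
end

section
/- PJR+ with its natural witness function satisfies merge-proofness: if N' is a natural PJR+ witness for (I, W) and A' agrees with A outside N' while A_i ⊆ A'_i ⊆ ⋃_{j∈N'} A_j for all i ∈ N', then N' is a natural PJR+ witness for ((N, A', C, k), W). -/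
open Finset

/-- `N'` is a natural witness of a PJR+ violation of `W` in `(N, A, C, k)`:
there are `ℓ ∈ [k]` and `c ∈ C \\ W` with `N' ⊆ N_c`, `|N'| ≥ ℓ·n/k`, and
`|⋃_{i∈N'}(A_i ∩ W)| < ℓ`. -/
def NaturalPJRplusWitness (N C : Finset ℕ) (A : ℕ → Finset ℕ) (k : ℕ) (W : Finset ℕ)
    (N' : Finset ℕ) : Prop :=
  ∃ ℓ : ℕ, 1 ≤ ℓ ∧ ℓ ≤ k ∧ ∃ c ∈ C, c ∉ W ∧ N' ⊆ N ∧ (∀ i ∈ N', c ∈ A i) ∧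
    ℓ * N.card ≤ N'.card * k ∧ (N'.biUnion fun i => A i ∩ W).card < ℓ

theorem biUnion_inter_subset_of_subset_biUnion {ι α : Type*} [DecidableEq α] {s : Finset ι}
    {f g : ι → Finset α} (h : ∀ i ∈ s, g i ⊆ s.biUnion f) (t : Finset α) :
    (s.biUnion fun i => g i ∩ t) ⊆ s.biUnion fun i => f i ∩ t := by
  rw [← biUnion_inter, ← biUnion_inter]
  exact inter_subset_inter_right (biUnion_subset.mpr h)

theorem NaturalPJRplusWitness.of_subset_of_card_le {N C : Finset ℕ} {A A' : ℕ → Finset ℕ}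
    {k : ℕ} {W N' : Finset ℕ} (hw : NaturalPJRplusWitness N C A k W N')
    (hsub : ∀ i ∈ N', A i ⊆ A' i)
    (hcard : (N'.biUnion fun i => A' i ∩ W).card ≤ (N'.biUnion fun i => A i ∩ W).card) :
    NaturalPJRplusWitness N C A' k W N' := by
  obtain ⟨ℓ, hℓ, hℓk, c, hc, hcW, hN', hcA, hsize, hrep⟩ := hw
  exact ⟨ℓ, hℓ, hℓk, c, hc, hcW, hN', fun i hi => hsub i hi (hcA i hi), hsize,
    hcard.trans_lt hrep⟩

theorem pjrplus_natural_witness_mergeProof_general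
    (N C : Finset ℕ) (A A' : ℕ → Finset ℕ) (k : ℕ) (W : Finset ℕ) (N' : Finset ℕ)
    (hw : NaturalPJRplusWitness N C A k W N')
    (hin : ∀ i ∈ N', A i ⊆ A' i ∧ A' i ⊆ N'.biUnion A) :
    NaturalPJRplusWitness N C A' k W N' :=
  hw.of_subset_of_card_le (fun i hi => (hin i hi).1) <|
    card_le_card <| biUnion_inter_subset_of_subset_biUnion (fun i hi => (hin i hi).2) W

/-- PJR+ with its natural witness function satisfies merge-proofness: a natural
PJR+ witness `N'` remains a witness when voters of `N'` extend their ballots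
within the union `⋃_{j∈N'} A_j`, while all other ballots stay unchanged. -/
theorem pjrplus_natural_witness_mergeProof
    (N C : Finset ℕ) (A A' : ℕ → Finset ℕ) (k : ℕ) (W : Finset ℕ) (N' : Finset ℕ)
    (hw : NaturalPJRplusWitness N C A k W N')
    (hout : ∀ i, i ∉ N' → A' i = A i)
    (hin : ∀ i ∈ N', A i ⊆ A' i ∧ A' i ⊆ N'.biUnion A) :
    NaturalPJRplusWitness N C A' k W N' :=
  pjrplus_natural_witness_mergeProof_general N C A A' k W N' hw hin
end

section
/- A committee W is sub-core-stable if and only if for every subset C' ⊆ C \ W, every ℓ ∈ [k], and every group N' of voters each approving at least one candidate of C' with |N'| ≥ ℓ·n/k, it holds that |⋃_{i∈N'}(A_i ∩ W)| > ℓ − |C'|. -/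
/-!
A blocking pair `(N', C')` translates between the two conditions by splitting `C'` at `W`:
its new candidates `C' \ W` are approved by every member of `N'`, and its old ones contain
all winners approved by `N'`. Conversely, the new candidates together with those approved
winners form a blocking set of size at most `ℓ`.
-/

open Finset

/-- `W` is sub-core-stable: there are no `ℓ ∈ [k]`, group `N' ⊆ N` with
`|N'| ≥ ℓ·n/k`, and set `C' ⊆ C` with `|C'| ≤ ℓ` such that
`A_i ∩ C'` strictly contains `A_i ∩ W` for all `i ∈ N'`. -/
def SubCoreStable (N C : Finset ℕ) (A : ℕ → Finset ℕ) (k : ℕ) (W : Finset ℕ) : Prop :=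
  ¬ ∃ ℓ : ℕ, 1 ≤ ℓ ∧ ℓ ≤ k ∧ ∃ N' ⊆ N, ∃ C' ⊆ C,
      ℓ * N.card ≤ N'.card * k ∧ C'.card ≤ ℓ ∧ ∀ i ∈ N', A i ∩ W ⊂ A i ∩ C'

section Blocking

variable {ι α : Type*} [DecidableEq α]

theorem ssubset_inter_biUnion_union {A : ι → Finset α} {W C' : Finset α} {N' : Finset ι} {i : ι}
    (hi : i ∈ N') (hC' : Disjoint C' W) (hne : (A i ∩ C').Nonempty) :
    A i ∩ W ⊂ A i ∩ ((N'.biUnion fun j => A j ∩ W) ∪ C') := by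
  obtain ⟨x, hx⟩ := hne
  obtain ⟨hxA, hxC'⟩ := mem_inter.1 hx
  refine (ssubset_iff_of_subset fun y hy => ?_).2 ⟨x, ?_, ?_⟩
  · exact mem_inter.2 ⟨(mem_inter.1 hy).1, mem_union_left _ (mem_biUnion.2 ⟨i, hi, hy⟩)⟩
  · exact mem_inter.2 ⟨hxA, mem_union_right _ hxC'⟩
  · exact fun hxW => disjoint_left.1 hC' hxC' (mem_inter.1 hxW).2

theorem nonempty_inter_sdiff_of_inter_ssubset {s W C' : Finset α} (h : s ∩ W ⊂ s ∩ C') :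
    (s ∩ (C' \ W)).Nonempty := by
  obtain ⟨x, hxC', hxW⟩ := exists_of_ssubset h
  obtain ⟨hxs, hx⟩ := mem_inter.1 hxC'
  exact ⟨x, mem_inter.2 ⟨hxs, mem_sdiff.2 ⟨hx, fun hw => hxW (mem_inter.2 ⟨hxs, hw⟩)⟩⟩⟩

theorem card_biUnion_inter_add_card_sdiff_le {A : ι → Finset α} {W C' : Finset α}
    {N' : Finset ι} (h : ∀ i ∈ N', A i ∩ W ⊂ A i ∩ C') :
    (N'.biUnion fun i => A i ∩ W).card + (C' \ W).card ≤ C'.card := by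
  have hsub : (N'.biUnion fun i => A i ∩ W) ⊆ C' ∩ W := biUnion_subset.2 fun i hi x hx =>
    mem_inter.2 ⟨(mem_inter.1 ((h i hi).1 hx)).2, (mem_inter.1 hx).2⟩
  calc (N'.biUnion fun i => A i ∩ W).card + (C' \ W).card
      ≤ (C' ∩ W).card + (C' \ W).card := Nat.add_le_add_right (card_le_card hsub) _
    _ = C'.card := by rw [add_comm, card_sdiff_add_card_inter]

end Blocking

theorem subCoreStable_iff_general
    (N C : Finset ℕ) (A : ℕ → Finset ℕ) (k : ℕ) (W : Finset ℕ)
    (hW : W ⊆ C) :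
    SubCoreStable N C A k W ↔
      ∀ C' ⊆ C \ W, ∀ ℓ : ℕ, 1 ≤ ℓ → ℓ ≤ k → ∀ N' ⊆ N,
        (∀ i ∈ N', (A i ∩ C').Nonempty) → ℓ * N.card ≤ N'.card * k →
        ℓ < (N'.biUnion fun i => A i ∩ W).card + C'.card := by
  constructor
  · intro hstable C' hC' ℓ hℓ1 hℓk N' hN' hne hcard
    by_contra! hle
    refine hstable ⟨ℓ, hℓ1, hℓk, N', hN', (N'.biUnion fun i => A i ∩ W) ∪ C', ?_, hcard,
      (card_union_le _ _).trans hle, fun i hi => ?_⟩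
    · exact union_subset (biUnion_subset.2 fun i _ => inter_subset_right.trans hW)
        (hC'.trans sdiff_subset)
    · exact ssubset_inter_biUnion_union hi (disjoint_of_subset_left hC' sdiff_disjoint) (hne i hi)
  · rintro h ⟨ℓ, hℓ1, hℓk, N', hN', C', hC', hcard, hC'ℓ, hblock⟩
    have hmore := h (C' \ W) (sdiff_subset_sdiff hC' subset_rfl) ℓ hℓ1 hℓk N' hN'
      (fun i hi => nonempty_inter_sdiff_of_inter_ssubset (hblock i hi)) hcard
    have hfewer := card_biUnion_inter_add_card_sdiff_le hblock
    omega

/-- A committee `W` is sub-core-stable iff for every `C' ⊆ C \\ W`, every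
`ℓ ∈ [k]`, and every group `N'` of voters each approving at least one candidate
of `C'` with `|N'| ≥ ℓ·n/k`, we have `|⋃_{i∈N'}(A_i ∩ W)| > ℓ − |C'|`. -/
theorem subCoreStable_iff
    (N C : Finset ℕ) (A : ℕ → Finset ℕ) (k : ℕ) (W : Finset ℕ)
    (hN : N.Nonempty) (hk : 0 < k) (hA : ∀ i ∈ N, A i ⊆ C)
    (hW : W ⊆ C) (hWk : W.card = k) :
    SubCoreStable N C A k W ↔
      ∀ C' ⊆ C \ W, ∀ ℓ : ℕ, 1 ≤ ℓ → ℓ ≤ k → ∀ N' ⊆ N,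
        (∀ i ∈ N', (A i ∩ C').Nonempty) → ℓ * N.card ≤ N'.card * k →
        ℓ < (N'.biUnion fun i => A i ∩ W).card + C'.card :=
  subCoreStable_iff_general N C A k W hW
end

section
/- Every sub-core-stable committee satisfies FPJR: for every set T ⊆ C and β ∈ [k], if N' ⊆ N satisfies |N'| ≥ |T|·n/k and |A_i ∩ T| ≥ β for all i ∈ N', then |⋃_{i∈N'}(A_i ∩ W)| ≥ β. -/
/-!
Suppose the voters of a `(β, T)`-cohesive group `N'` jointly approve a set `U` of fewer than `β`
members of `W`. Complete `U` by a set `T' ⊆ T \ U` of `|T| - |U|` candidates to `C' = U ∪ T'`,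
so `|C'| = |T|`. Every voter of `N'` approves at least `β > |U| = |T \ T'|` candidates of `T`,
hence one in `T'`, which lies in `C'` but not in `W`. So `N'` and `C'` block `W` with `ℓ = |T|`.
-/

open Finset

namespace Finset

variable {α : Type*} [DecidableEq α]

theorem inter_nonempty_of_card_sdiff_lt_card_inter {B T T' : Finset α}
    (h : #(T \ T') < #(B ∩ T)) : (B ∩ T').Nonempty := by
  by_contra hempty
  have hsub : B ∩ T ⊆ T \ T' := fun x hx =>
    mem_sdiff.2 ⟨(mem_inter.1 hx).2, fun hxT' =>
      hempty ⟨x, mem_inter.2 ⟨(mem_inter.1 hx).1, hxT'⟩⟩⟩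
  exact (card_le_card hsub).not_gt h

theorem exists_card_eq_forall_inter_ssubset {ι : Type*} {N' : Finset ι} {A : ι → Finset α}
    {W T U : Finset α} {β : ℕ} (hWU : ∀ i ∈ N', A i ∩ W ⊆ U) (hUβ : #U < β)
    (hUT : #U ≤ #T) (hcoh : ∀ i ∈ N', β ≤ #(A i ∩ T)) :
    ∃ C' ⊆ U ∪ T, #C' = #T ∧ ∀ i ∈ N', A i ∩ W ⊂ A i ∩ C' := by
  obtain ⟨T', hT'sub, hT'card⟩ := exists_subset_card_eq (le_card_sdiff U T)
  have hT'T : T' ⊆ T := hT'sub.trans sdiff_subset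
  have hdisj : Disjoint U T' := disjoint_of_subset_right hT'sub disjoint_sdiff
  have hcompl : #(T \ T') = #U := by rw [card_sdiff_of_subset hT'T, hT'card]; omega
  refine ⟨U ∪ T', union_subset_union_right hT'T, ?_, fun i hi => ?_⟩
  · rw [card_union_of_disjoint hdisj, hT'card]; omega
  obtain ⟨x, hx⟩ := inter_nonempty_of_card_sdiff_lt_card_inter
    (B := A i) (hcompl ▸ hUβ.trans_le (hcoh i hi))
  have hxA := (mem_inter.1 hx).1
  have hxU : x ∉ U := disjoint_right.1 hdisj (mem_inter.1 hx).2
  refine ssubset_iff_of_subset (fun y hy => ?_) |>.2 ⟨x, ?_, fun hxW => hxU (hWU i hi hxW)⟩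
  · exact mem_inter.2 ⟨(mem_inter.1 hy).1, mem_union_left _ (hWU i hi hy)⟩
  · exact mem_inter.2 ⟨hxA, mem_union_right _ (mem_inter.1 hx).2⟩

end Finset

theorem subCore_implies_fpjr_general
    (N C : Finset ℕ) (A : ℕ → Finset ℕ) (k : ℕ) (W : Finset ℕ)
    (hA : ∀ i ∈ N, A i ⊆ C)
    (h : SubCoreStable N C A k W) :
    ∀ T ⊆ C, ∀ β : ℕ, 1 ≤ β → β ≤ k → ∀ N' ⊆ N, N'.Nonempty →
      T.card * N.card ≤ N'.card * k → (∀ i ∈ N', β ≤ (A i ∩ T).card) →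
      β ≤ (N'.biUnion fun i => A i ∩ W).card := by
  intro T hT β hβ _ N' hN' ⟨i₀, hi₀⟩ hcard hcoh
  by_contra! hU
  have hβT : β ≤ #T := (hcoh i₀ hi₀).trans (card_le_card inter_subset_right)
  have hTk : #T ≤ k := by
    refine Nat.le_of_mul_le_mul_right ?_ (card_pos.2 ⟨i₀, hN' hi₀⟩)
    calc #T * #N ≤ #N' * k := hcard
      _ ≤ #N * k := Nat.mul_le_mul_right k (card_le_card hN')
      _ = k * #N := Nat.mul_comm _ _
  obtain ⟨C', hC'sub, hC'card, hdev⟩ := exists_card_eq_forall_inter_ssubset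
    (fun i hi => subset_biUnion_of_mem (fun i => A i ∩ W) hi) hU (hU.le.trans hβT) hcoh
  have hC' : C' ⊆ C := hC'sub.trans <| union_subset
    (biUnion_subset.2 fun i hi => inter_subset_left.trans (hA i (hN' hi))) hT
  exact h ⟨#T, hβ.trans hβT, hTk, N', hN', C', hC', hcard, hC'card.le, hdev⟩

/-- Every sub-core-stable committee satisfies FPJR: for every `T ⊆ C`, `β ∈ [k]`,
and every (β,T)-cohesive group `N'` (i.e. `|N'| ≥ |T|·n/k` and `|A_i ∩ T| ≥ β`
for all `i ∈ N'`), we have `|⋃_{i∈N'}(A_i ∩ W)| ≥ β`. -/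
theorem subCore_implies_fpjr
    (N C : Finset ℕ) (A : ℕ → Finset ℕ) (k : ℕ) (W : Finset ℕ)
    (hN : N.Nonempty) (hk : 0 < k) (hA : ∀ i ∈ N, A i ⊆ C)
    (hW : W ⊆ C) (hWk : W.card = k)
    (h : SubCoreStable N C A k W) :
    ∀ T ⊆ C, ∀ β : ℕ, 1 ≤ β → β ≤ k → ∀ N' ⊆ N, N'.Nonempty →
      T.card * N.card ≤ N'.card * k → (∀ i ∈ N', β ≤ (A i ∩ T).card) →
      β ≤ (N'.biUnion fun i => A i ∩ W).card :=
  subCore_implies_fpjr_general N C A k W hA h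
end

section
/- Every committee that is g_ε-representative for some ε > 0 (near perfect representation, NPR) satisfies EJR+, and the inclusion is strict: with n = 4, k = 4, ballots A_i = {c₁,…,c_{6−i}} for i ∈ {1,2,3,4} arranged so that voter i approves c₁ and the candidates c₂,…,c_{6−i} (voter 1 approves {c₁,…,c₅}, voter 2 approves {c₁,…,c₄}, voter 3 approves {c₁,c₂,c₃}, voter 4 approves {c₁,c₂}), the committee {c₂,c₃,c₄,c₅} satisfies EJR+ but not NPR. -/
open Finset

/-- `W` is `g`-representative: for every `ℓ ∈ [k]`, unelected candidate `c ∉ W`,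
and `ℓ`-large group `N'` of supporters of `c`, the average number of approved
committee members over `N'` is at least `g ℓ`. -/
def GRepresentative (N : Finset ℕ) (A : ℕ → Finset ℕ) (k : ℕ) (W : Finset ℕ)
    (g : ℕ → ℝ) : Prop :=
  ∀ ℓ : ℕ, 1 ≤ ℓ → ℓ ≤ k → ∀ c : ℕ, c ∉ W →
    ∀ N' ⊆ N, (∀ i ∈ N', c ∈ A i) → ℓ * N.card ≤ N'.card * k →
    g ℓ * (N'.card : ℝ) ≤ ∑ i ∈ N', ((A i ∩ W).card : ℝ)

/-- Near perfect representation (NPR): `W` is `g_ε`-representative for some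
`ε > 0`, where `g_ε ℓ = ℓ - 1 + ε`. -/
def NPR (N : Finset ℕ) (A : ℕ → Finset ℕ) (k : ℕ) (W : Finset ℕ) : Prop :=
  ∃ ε : ℝ, 0 < ε ∧ GRepresentative N A k W (fun ℓ => (ℓ : ℝ) - 1 + ε)

/-!
If every member of a large cohesive group approved at most `ℓ - 1` committee members, the
group's average would be at most `ℓ - 1`, below any `g ℓ > ℓ - 1`; hence a `g`-representative
committee satisfies EJR+. In the example, every nonempty group `N'` contains a voter approving
at least `|N'|` members of `{2,3,4,5}`, which gives EJR+; but the whole electorate, a `4`-large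
group supporting candidate `1`, approves on average only `10 / 4 < 3` members.
-/

lemma card_pos_of_large_group {N N' : Finset ℕ} {ℓ k : ℕ} (hN : N.Nonempty) (hℓ : 1 ≤ ℓ)
    (hlarge : ℓ * N.card ≤ N'.card * k) : 0 < N'.card :=
  Nat.pos_of_ne_zero fun h => by
    have := Nat.mul_pos hℓ hN.card_pos
    rw [h, zero_mul] at hlarge
    omega

section

variable {N : Finset ℕ} {A : ℕ → Finset ℕ} {k : ℕ} {W : Finset ℕ}

theorem GRepresentative.ejrplus {g : ℕ → ℝ} (hN : N.Nonempty) (hg : ∀ ℓ : ℕ, (ℓ : ℝ) - 1 < g ℓ)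
    (hW : GRepresentative N A k W g) : EJRplus N A k W := by
  intro ℓ hℓ hℓk c hc N' hN' hsupp hlarge
  have hcard : (0 : ℝ) < N'.card := by exact_mod_cast card_pos_of_large_group hN hℓ hlarge
  have hlt : ∑ _i ∈ N', ((ℓ : ℝ) - 1) < ∑ i ∈ N', ((A i ∩ W).card : ℝ) :=
    calc ∑ _i ∈ N', ((ℓ : ℝ) - 1) = ((ℓ : ℝ) - 1) * N'.card := by
          rw [sum_const, nsmul_eq_mul, mul_comm]
      _ < g ℓ * N'.card := mul_lt_mul_of_pos_right (hg ℓ) hcard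
      _ ≤ _ := hW ℓ hℓ hℓk c hc N' hN' hsupp hlarge
  obtain ⟨i, hi, hlt_i⟩ := exists_lt_of_sum_lt hlt
  exact ⟨i, hi, Nat.lt_succ_iff.mp (by exact_mod_cast sub_lt_iff_lt_add.mp hlt_i)⟩

theorem NPR.ejrplus (hN : N.Nonempty) (hW : NPR N A k W) : EJRplus N A k W := by
  obtain ⟨ε, hε, hrep⟩ := hW
  exact hrep.ejrplus hN fun ℓ => by linarith

end

lemma example_exists_voter_ge_card :
    ∀ N' ⊆ Icc 1 4, N'.Nonempty → ∃ i ∈ N', N'.card ≤ (Icc 1 (6 - i) ∩ Icc 2 5).card := by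
  decide

lemma example_sum_card_inter :
    ∑ i ∈ Icc 1 4, ((Icc 1 (6 - i) ∩ Icc 2 5).card : ℝ) = 10 := by
  exact_mod_cast (by decide : ∑ i ∈ Icc 1 4, (Icc 1 (6 - i) ∩ Icc 2 5).card = 10)

theorem example_ejrplus :
    EJRplus (Icc 1 4) (fun i => Icc 1 (6 - i)) 4 (Icc 2 5) := by
  intro ℓ hℓ _ _ _ N' hN' _ hlarge
  rw [Nat.card_Icc] at hlarge
  obtain ⟨i, hi, hge⟩ :=
    example_exists_voter_ge_card N' hN' (card_pos.mp (by omega))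
  exact ⟨i, hi, show ℓ ≤ (Icc 1 (6 - i) ∩ Icc 2 5).card by omega⟩

theorem example_not_npr :
    ¬ NPR (Icc 1 4) (fun i => Icc 1 (6 - i)) 4 (Icc 2 5) := by
  rintro ⟨ε, hε, hrep⟩
  have h := hrep 4 (by norm_num) le_rfl 1 (by decide) (Icc 1 4) Subset.rfl (by decide) le_rfl
  rw [example_sum_card_inter, Nat.card_Icc] at h
  norm_num at h
  linarith

/-- NPR implies EJR+, and the inclusion is strict: in the instance with `n = 4`,
`k = 4`, ballots `A_i = {1, …, 6−i}` for `i ∈ {1,2,3,4}`, the committee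
`{2,3,4,5}` satisfies EJR+ but not NPR. -/
theorem npr_implies_ejrplus_strict :
    (∀ (N : Finset ℕ) (A : ℕ → Finset ℕ) (k : ℕ) (W : Finset ℕ),
      N.Nonempty → NPR N A k W → EJRplus N A k W) ∧
    EJRplus (Finset.Icc 1 4) (fun i => Finset.Icc 1 (6 - i)) 4 (Finset.Icc 2 5) ∧
    ¬ NPR (Finset.Icc 1 4) (fun i => Finset.Icc 1 (6 - i)) 4 (Finset.Icc 2 5) :=
  ⟨fun _ _ _ _ hN hW => hW.ejrplus hN, example_ejrplus, example_not_npr⟩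
end
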